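/- arXiv:2305.17562 — 7 statements merged into one kernel-verified Lean document; each statement's English description precedes it below -/
import Mathlib

section
/- Let Σ be an m×m positive semidefinite real matrix, and let B₁,…,B_K be matrices with B_ℓ of size m×s_ℓ such that tr(B_ℓ' Σ B_ℓ) ≤ α for all ℓ. Let w ∈ ℝ^K have nonnegative components summing to 1, and define N(w) = Σ_ℓ w_ℓ B_ℓ B_ℓ'. If X is an m×r matrix with column space contained in the column space of N(w), then tr(X' Σ X) ≤ α · λ_max(X' N(w)⁺ X), where N(w)⁺ is the Moore–Penrose pseudoinverse and λ_max denotes the largest eigenvalue. -/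
open Matrix
open scoped MatrixOrder

/-- The largest eigenvalue of a (symmetric) real matrix, as the supremum of its
real eigenvalues. -/
noncomputable def maxEigenvalue {r : ℕ} (A : Matrix (Fin r) (Fin r) ℝ) : ℝ :=
  sSup {t : ℝ | ∃ v : Fin r → ℝ, v ≠ 0 ∧ A.mulVec v = t • v}

/-- `B` is the Moore–Penrose pseudoinverse of `A` (the four Penrose conditions). -/
def IsMoorePenrose {m n : Type*} [Fintype m] [Fintype n]
    (A : Matrix m n ℝ) (B : Matrix n m ℝ) : Prop :=
  A * B * A = A ∧ B * A * B = B ∧ (A * B)ᵀ = A * B ∧ (B * A)ᵀ = B * A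

/-- The column space of a matrix. -/
def colSpace {m n : Type*} [Fintype m] [Fintype n]
    (A : Matrix m n ℝ) : Submodule ℝ (m → ℝ) :=
  LinearMap.range A.mulVecLin

section Aux

lemma mp_unique {n : Type*} [Fintype n] {A P Q : Matrix n n ℝ}
    (hP : IsMoorePenrose A P) (hQ : IsMoorePenrose A Q) : P = Q := by
  obtain ⟨p1, p2, p3, p4⟩ := hP
  obtain ⟨q1, q2, q3, q4⟩ := hQ
  have e1 : Pᵀ * Aᵀ = A * P := by rw [← transpose_mul, p3]
  have e2 : Aᵀ * Pᵀ = P * A := by rw [← transpose_mul, p4]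
  have e3 : Qᵀ * Aᵀ = A * Q := by rw [← transpose_mul, q3]
  have f : Aᵀ * (Qᵀ * Aᵀ) = Aᵀ := by
    rw [← transpose_mul, ← transpose_mul, q1]
  have hAP : A * P = A * Q := by
    calc A * P = Pᵀ * Aᵀ := e1.symm
    _ = Pᵀ * (Aᵀ * (Qᵀ * Aᵀ)) := by rw [f]
    _ = (Pᵀ * Aᵀ) * (Qᵀ * Aᵀ) := by rw [← mul_assoc]
    _ = (A * P) * (A * Q) := by rw [e1, e3]
    _ = A * Q := by rw [← mul_assoc, p1]
  have hPA : P * A = Q * A := by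
    have e4 : Aᵀ * Qᵀ = Q * A := by rw [← transpose_mul, q4]
    calc P * A = Aᵀ * Pᵀ := e2.symm
    _ = ((Aᵀ * Qᵀ) * Aᵀ) * Pᵀ := by rw [mul_assoc Aᵀ Qᵀ Aᵀ, f]
    _ = ((Q * A) * Aᵀ) * Pᵀ := by rw [e4]
    _ = (Q * A) * (Aᵀ * Pᵀ) := by rw [mul_assoc]
    _ = (Q * A) * (P * A) := by rw [e2]
    _ = Q * ((A * P) * A) := by rw [mul_assoc, ← mul_assoc A P A]
    _ = Q * A := by rw [p1]
  calc P = P * A * P := p2.symm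
  _ = P * (A * Q) := by rw [mul_assoc, hAP]
  _ = Q * A * Q := by rw [← mul_assoc, hPA]
  _ = Q := q2

lemma mp_transpose_symm {n : Type*} [Fintype n] {A P : Matrix n n ℝ}
    (hA : Aᵀ = A) (h : IsMoorePenrose A P) : Pᵀ = P := by
  refine mp_unique ?_ h
  obtain ⟨p1, p2, p3, p4⟩ := h
  refine ⟨?_, ?_, ?_, ?_⟩
  · calc A * Pᵀ * A = Aᵀ * (Pᵀ * Aᵀ) := by rw [hA, mul_assoc]
    _ = Aᵀ * (A * P)ᵀ := by rw [transpose_mul]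
    _ = ((A * P) * A)ᵀ := by rw [← transpose_mul]
    _ = Aᵀ := by rw [p1]
    _ = A := hA
  · calc Pᵀ * A * Pᵀ = Pᵀ * (Aᵀ * Pᵀ) := by rw [hA, mul_assoc]
    _ = Pᵀ * (P * A)ᵀ := by rw [transpose_mul]
    _ = ((P * A) * P)ᵀ := by rw [← transpose_mul]
    _ = Pᵀ := by rw [p2]
  · calc (A * Pᵀ)ᵀ = P * Aᵀ := by rw [transpose_mul, transpose_transpose]
    _ = (P * A)ᵀ := by rw [hA, p4]
    _ = A * Pᵀ := by rw [transpose_mul, hA]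
  · calc (Pᵀ * A)ᵀ = Aᵀ * P := by rw [transpose_mul, transpose_transpose]
    _ = (A * P)ᵀ := by rw [hA, p3]
    _ = Pᵀ * A := by rw [transpose_mul, hA]

lemma eigSet_subset_range {n : ℕ} {A : Matrix (Fin n) (Fin n) ℝ} (hA : A.IsHermitian) :
    {t : ℝ | ∃ v : Fin n → ℝ, v ≠ 0 ∧ A.mulVec v = t • v} ⊆ Set.range hA.eigenvalues := by
  rintro t ⟨v, hv, hAv⟩
  set U : Matrix (Fin n) (Fin n) ℝ := (hA.eigenvectorUnitary : Matrix (Fin n) (Fin n) ℝ) with hU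
  have hU1 : star U * U = 1 := mem_unitaryGroup_iff'.mp hA.eigenvectorUnitary.2
  have hU2 : U * star U = 1 := mem_unitaryGroup_iff.mp hA.eigenvectorUnitary.2
  set u : Fin n → ℝ := (star U) *ᵥ v with hu
  have hune : u ≠ 0 := by
    intro h
    apply hv
    have hv' : U *ᵥ u = v := by rw [hu, mulVec_mulVec, hU2, one_mulVec]
    rw [h, mulVec_zero] at hv'
    exact hv'.symm
  have hspec : A = U * diagonal hA.eigenvalues * star U := by
    simpa [RCLike.ofReal_real_eq_id] using hA.spectral_theorem
  have hDu : (diagonal hA.eigenvalues) *ᵥ u = t • u := by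
    have h2 : (star U * A) *ᵥ v = (diagonal hA.eigenvalues * star U) *ᵥ v := by
      have h' := congrArg (fun M => star U * M) hspec
      rw [h', show star U * (U * diagonal hA.eigenvalues * star U)
            = (star U * U) * (diagonal hA.eigenvalues * star U) by
        simp only [mul_assoc]]
      rw [hU1, one_mul]
    calc (diagonal hA.eigenvalues) *ᵥ u = (diagonal hA.eigenvalues * star U) *ᵥ v := by
          rw [hu, mulVec_mulVec]
    _ = (star U) *ᵥ (A *ᵥ v) := by rw [← h2, ← mulVec_mulVec]
    _ = t • u := by rw [hAv, mulVec_smul, hu]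
  obtain ⟨i, hi⟩ := Function.ne_iff.mp hune
  refine ⟨i, ?_⟩
  have h3 := congrFun hDu i
  rw [mulVec_diagonal] at h3
  simp only [Pi.smul_apply, smul_eq_mul] at h3
  exact mul_right_cancel₀ hi h3

lemma eig_mem {n : ℕ} {A : Matrix (Fin n) (Fin n) ℝ} (hA : A.IsHermitian) (i : Fin n) :
    hA.eigenvalues i ∈ {t : ℝ | ∃ v : Fin n → ℝ, v ≠ 0 ∧ A.mulVec v = t • v} :=
  ⟨_, by simpa using hA.eigenvectorBasis.orthonormal.ne_zero i, hA.mulVec_eigenvectorBasis i⟩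

lemma quad_le_of_eig_le {n : ℕ} {A : Matrix (Fin n) (Fin n) ℝ} (hA : A.IsHermitian) {μ : ℝ}
    (h : ∀ i, hA.eigenvalues i ≤ μ) (v : Fin n → ℝ) :
    v ⬝ᵥ A *ᵥ v ≤ μ * (v ⬝ᵥ v) := by
  set U : Matrix (Fin n) (Fin n) ℝ := (hA.eigenvectorUnitary : Matrix (Fin n) (Fin n) ℝ) with hU
  have hU1 : star U * U = 1 := mem_unitaryGroup_iff'.mp hA.eigenvectorUnitary.2
  have hU2 : U * star U = 1 := mem_unitaryGroup_iff.mp hA.eigenvectorUnitary.2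
  have hsU : star U = Uᵀ := by
    rw [Matrix.star_eq_conjTranspose, conjTranspose_eq_transpose_of_trivial]
  set u : Fin n → ℝ := (star U) *ᵥ v with hu
  have hspec : A = U * diagonal hA.eigenvalues * star U := by
    simpa [RCLike.ofReal_real_eq_id] using hA.spectral_theorem
  have hdot : ∀ w : Fin n → ℝ, v ⬝ᵥ U *ᵥ w = u ⬝ᵥ w := by
    intro w
    rw [dotProduct_mulVec, hu, hsU, mulVec_transpose]
  have h1 : v ⬝ᵥ A *ᵥ v = u ⬝ᵥ (diagonal hA.eigenvalues) *ᵥ u := by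
    have h' := congrArg (fun M => v ⬝ᵥ M *ᵥ v) hspec
    rw [h', show (U * diagonal hA.eigenvalues * star U) *ᵥ v
          = U *ᵥ ((diagonal hA.eigenvalues) *ᵥ u) by
      rw [hu, mulVec_mulVec, mulVec_mulVec]]
    exact hdot _
  have h2 : v ⬝ᵥ v = u ⬝ᵥ u := by
    have h3 : v = U *ᵥ u := by rw [hu, mulVec_mulVec, hU2, one_mulVec]
    conv_lhs => rw [h3]
    rw [← hdot u, h3]
  rw [h1, h2]
  have e1 : u ⬝ᵥ (diagonal hA.eigenvalues) *ᵥ u = ∑ i, hA.eigenvalues i * (u i)^2 := by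
    simp [dotProduct, mulVec_diagonal]
    congr 1; funext i; ring
  rw [e1]
  have e2 : μ * (u ⬝ᵥ u) = ∑ i, μ * (u i)^2 := by
    simp [dotProduct, Finset.mul_sum]; congr 1; funext i; ring
  rw [e2]
  exact Finset.sum_le_sum fun i _ =>
    mul_le_mul_of_nonneg_right (h i) (sq_nonneg _)

lemma psd_trace_nonneg {n : Type*} [Fintype n] [DecidableEq n] {M : Matrix n n ℝ}
    (hM : M.PosSemidef) : 0 ≤ M.trace := by
  rw [Matrix.trace]
  apply Finset.sum_nonneg
  intro i _
  have := hM.dotProduct_mulVec_nonneg (Pi.single i 1)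
  simpa [Matrix.diag, mulVec_single, dotProduct, Pi.single_apply] using this

lemma psd_mul_trace_nonneg {n : Type*} [Fintype n] [DecidableEq n] {M D : Matrix n n ℝ}
    (hM : M.PosSemidef) (hD : D.PosSemidef) : 0 ≤ (M * D).trace := by
  have hs := CFC.sqrt_mul_sqrt_self M hM.nonneg
  have hpsd : (CFC.sqrt M * D * CFC.sqrt M).PosSemidef := by
    have := hD.mul_mul_conjTranspose_same (CFC.sqrt M)
    rwa [show (CFC.sqrt M)ᴴ = CFC.sqrt M from (CFC.sqrt_nonneg M).posSemidef.isHermitian] at this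
  calc (0:ℝ) ≤ (CFC.sqrt M * D * CFC.sqrt M).trace := psd_trace_nonneg hpsd
  _ = (CFC.sqrt M * (D * CFC.sqrt M)).trace := by rw [mul_assoc]
  _ = ((D * CFC.sqrt M) * CFC.sqrt M).trace := trace_mul_comm _ _
  _ = (D * M).trace := by rw [mul_assoc, hs]
  _ = (M * D).trace := trace_mul_comm _ _

lemma dot_mulVec_left {k l : Type*} [Fintype k] [Fintype l] (A : Matrix k l ℝ) (x : k → ℝ)
    (y : l → ℝ) : x ⬝ᵥ A *ᵥ y = (Aᵀ *ᵥ x) ⬝ᵥ y := by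
  rw [dotProduct_mulVec, ← mulVec_transpose]

end Aux

/-- Lemma 1: if S is PSD with tr(Bₗ' S Bₗ) ≤ α for all ℓ, w is a weight vector,
N(w) = sumₗ wₗ Bₗ Bₗ', and C(X) ⊆ C(N(w)), then
tr(X' S X) ≤ α · λ_max(X' N(w)⁺ X). -/
theorem trace_quadratic_le_of_colSpace_subset
    {m K r : ℕ} {s : Fin K → ℕ}
    (S : Matrix (Fin m) (Fin m) ℝ) (hS : S.PosSemidef)
    (B : (ℓ : Fin K) → Matrix (Fin m) (Fin (s ℓ)) ℝ) (α : ℝ)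
    (hα : ∀ ℓ : Fin K, ((B ℓ)ᵀ * S * B ℓ).trace ≤ α)
    (w : Fin K → ℝ) (hw0 : ∀ ℓ, 0 ≤ w ℓ) (hw1 : ∑ ℓ, w ℓ = 1)
    (N : Matrix (Fin m) (Fin m) ℝ) (hN : N = ∑ ℓ, w ℓ • (B ℓ * (B ℓ)ᵀ))
    (Nplus : Matrix (Fin m) (Fin m) ℝ) (hNplus : IsMoorePenrose N Nplus)
    (X : Matrix (Fin m) (Fin r) ℝ) (hX : colSpace X ≤ colSpace N) :
    (Xᵀ * S * X).trace ≤ α * maxEigenvalue (Xᵀ * Nplus * X) := by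
  classical
  have hNt : Nᵀ = N := by
    rw [hN, transpose_sum]
    refine Finset.sum_congr rfl fun ℓ _ => ?_
    rw [transpose_smul, transpose_mul, transpose_transpose]
  have hNpsd : N.PosSemidef := by
    rw [hN]
    refine Finset.sum_induction _ _ (fun a b ha hb => ha.add hb) .zero fun ℓ _ => ?_
    have h1 : (B ℓ * (B ℓ)ᵀ).PosSemidef := by
      have := posSemidef_self_mul_conjTranspose (B ℓ)
      rwa [conjTranspose_eq_transpose_of_trivial] at this
    refine PosSemidef.of_dotProduct_mulVec_nonneg ?_ ?_
    · show (w ℓ • (B ℓ * (B ℓ)ᵀ))ᴴ = _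
      rw [conjTranspose_smul, star_trivial, h1.isHermitian]
    · intro x
      rw [smul_mulVec, dotProduct_smul, smul_eq_mul]
      exact mul_nonneg (hw0 ℓ) (h1.dotProduct_mulVec_nonneg x)
  have hPt : Nplusᵀ = Nplus := mp_transpose_symm hNt hNplus
  obtain ⟨m1, m2, m3, m4⟩ := hNplus
  have hXNX : N * Nplus * X = X := by
    have hcol : ∀ v : Fin r → ℝ, (N * Nplus * X) *ᵥ v = X *ᵥ v := by
      intro v
      have hmem : X *ᵥ v ∈ colSpace X := LinearMap.mem_range.mpr ⟨v, X.mulVecLin_apply v⟩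
      obtain ⟨y, hy⟩ := LinearMap.mem_range.mp (hX hmem)
      rw [N.mulVecLin_apply] at hy
      calc (N * Nplus * X) *ᵥ v = (N * Nplus) *ᵥ (X *ᵥ v) := by rw [mulVec_mulVec]
      _ = (N * Nplus) *ᵥ (N *ᵥ y) := by rw [hy]
      _ = (N * Nplus * N) *ᵥ y := by rw [mulVec_mulVec]
      _ = N *ᵥ y := by rw [m1]
      _ = X *ᵥ v := hy
    ext i j
    have := congrFun (hcol (Pi.single j 1)) i
    simpa [mulVec_single] using this
  set R := CFC.sqrt N with hRdef
  have hRt : Rᵀ = R := by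
    have := (CFC.sqrt_nonneg N).posSemidef.isHermitian
    rwa [Matrix.IsHermitian, conjTranspose_eq_transpose_of_trivial] at this
  have hRR : R * R = N := CFC.sqrt_mul_sqrt_self N hNpsd.nonneg
  set C := Xᵀ * Nplus * R with hC
  have hCt : Cᵀ = R * (Nplus * X) := by
    rw [hC, transpose_mul, transpose_mul, transpose_transpose, hRt, hPt]
  have hCC : C * Cᵀ = Xᵀ * Nplus * X := by
    rw [hCt, hC]
    calc Xᵀ * Nplus * R * (R * (Nplus * X))
        = Xᵀ * (Nplus * ((R * R) * (Nplus * X))) := by simp only [Matrix.mul_assoc]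
    _ = Xᵀ * (Nplus * (N * (Nplus * X))) := by rw [hRR]
    _ = Xᵀ * (Nplus * N * Nplus * X) := by simp only [Matrix.mul_assoc]
    _ = Xᵀ * (Nplus * X) := by rw [m2]
    _ = Xᵀ * Nplus * X := by rw [← Matrix.mul_assoc]
  have hCCpsd : (C * Cᵀ).PosSemidef := by
    have := posSemidef_self_mul_conjTranspose C
    rwa [conjTranspose_eq_transpose_of_trivial] at this
  have hCCh := hCCpsd.isHermitian
  have hGpsd : (Cᵀ * C).PosSemidef := by
    have := posSemidef_conjTranspose_mul_self C
    rwa [conjTranspose_eq_transpose_of_trivial] at this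
  have hGh := hGpsd.isHermitian
  set E := {t : ℝ | ∃ v : Fin r → ℝ, v ≠ 0 ∧ (C * Cᵀ).mulVec v = t • v} with hE
  have hbdd : BddAbove E :=
    ((Set.finite_range hCCh.eigenvalues).bddAbove).mono (eigSet_subset_range hCCh)
  set lam := maxEigenvalue (Xᵀ * Nplus * X) with hlam
  have hlamE : lam = sSup E := by
    rw [hlam, maxEigenvalue, hE, ← hCC]
  have hlam0 : 0 ≤ lam := by
    rcases Nat.eq_zero_or_pos r with hr | hr
    · have hE0 : E = ∅ := by
        ext t
        simp only [hE, Set.mem_setOf_eq, Set.mem_empty_iff_false, iff_false, not_exists]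
        rintro v ⟨hv, -⟩
        exact hv (funext fun i => absurd i.isLt (by omega))
      rw [hlamE, hE0, Real.sSup_empty]
    · have i0 : Fin r := ⟨0, hr⟩
      have h1 : hCCh.eigenvalues i0 ∈ E := eig_mem hCCh i0
      have h2 : 0 ≤ hCCh.eigenvalues i0 := hCCpsd.eigenvalues_nonneg i0
      rw [hlamE]
      exact le_trans h2 (le_csSup hbdd h1)
  have heig : ∀ i, hGh.eigenvalues i ≤ lam := by
    intro i
    obtain ⟨v, hv, hGv⟩ := eig_mem hGh i
    by_cases hd : hGh.eigenvalues i = 0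
    · rw [hd]; exact hlam0
    · have hu : (C * Cᵀ).mulVec (C *ᵥ v) = hGh.eigenvalues i • (C *ᵥ v) := by
        rw [mulVec_mulVec, Matrix.mul_assoc, ← mulVec_mulVec, hGv, mulVec_smul]
      have hune : C *ᵥ v ≠ 0 := by
        intro h0
        have h1 : (Cᵀ * C) *ᵥ v = 0 := by rw [← mulVec_mulVec, h0, mulVec_zero]
        rw [hGv] at h1
        rcases smul_eq_zero.mp h1 with h | h
        · exact hd h
        · exact hv h
      rw [hlamE]
      exact le_csSup hbdd ⟨C *ᵥ v, hune, hu⟩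
  have hCR : C * R = Xᵀ := by
    calc C * R = Xᵀ * (Nplus * (R * R)) := by rw [hC]; simp only [Matrix.mul_assoc]
    _ = Xᵀ * (Nplus * N) := by rw [hRR]
    _ = ((N * Nplus) * X)ᵀ := by rw [transpose_mul, transpose_mul, hPt, hNt]
    _ = Xᵀ := by rw [hXNX]
  have hkey : ∀ v : Fin m → ℝ, v ⬝ᵥ (X * Xᵀ) *ᵥ v ≤ lam * (v ⬝ᵥ N *ᵥ v) := by
    intro v
    have e1 : v ⬝ᵥ (X * Xᵀ) *ᵥ v = (Xᵀ *ᵥ v) ⬝ᵥ (Xᵀ *ᵥ v) := by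
      rw [← mulVec_mulVec, dot_mulVec_left]
    have e2 : Xᵀ *ᵥ v = C *ᵥ (R *ᵥ v) := by rw [mulVec_mulVec, hCR]
    have e3 : (R *ᵥ v) ⬝ᵥ (Cᵀ * C) *ᵥ (R *ᵥ v) = (C *ᵥ (R *ᵥ v)) ⬝ᵥ (C *ᵥ (R *ᵥ v)) := by
      rw [← mulVec_mulVec, dot_mulVec_left Cᵀ, transpose_transpose]
    have e4 := quad_le_of_eig_le hGh heig (R *ᵥ v)
    have e5 : (R *ᵥ v) ⬝ᵥ (R *ᵥ v) = v ⬝ᵥ N *ᵥ v := by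
      rw [← hRR, ← mulVec_mulVec, dot_mulVec_left R, hRt]
      exact dotProduct_comm _ _
    rw [e1, e2, ← e3]
    rw [e5] at e4
    exact e4
  have hDpsd : (lam • N - X * Xᵀ).PosSemidef := by
    refine PosSemidef.of_dotProduct_mulVec_nonneg ?_ ?_
    · show (lam • N - X * Xᵀ)ᴴ = _
      rw [conjTranspose_eq_transpose_of_trivial, transpose_sub, transpose_smul, hNt,
        transpose_mul, transpose_transpose]
    · intro x
      rw [star_trivial, sub_mulVec, dotProduct_sub, smul_mulVec, dotProduct_smul,
        smul_eq_mul]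
      have := hkey x
      linarith
  have t0 : (Xᵀ * S * X).trace = (S * (X * Xᵀ)).trace := by
    calc (Xᵀ * S * X).trace = (X * (Xᵀ * S)).trace := trace_mul_comm _ _
    _ = ((X * Xᵀ) * S).trace := by rw [← Matrix.mul_assoc]
    _ = (S * (X * Xᵀ)).trace := trace_mul_comm _ _
  have t1 : 0 ≤ (S * (lam • N - X * Xᵀ)).trace := psd_mul_trace_nonneg hS hDpsd
  have t2 : (S * (X * Xᵀ)).trace ≤ lam * (S * N).trace := by
    have expand : S * (lam • N - X * Xᵀ) = lam • (S * N) - S * (X * Xᵀ) := by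
      rw [mul_sub, mul_smul_comm]
    rw [expand, trace_sub, trace_smul, smul_eq_mul] at t1
    linarith
  have t3 : (S * N).trace ≤ α := by
    have step : ∀ ℓ : Fin K, (S * (w ℓ • (B ℓ * (B ℓ)ᵀ))).trace
        = w ℓ * ((B ℓ)ᵀ * S * B ℓ).trace := by
      intro ℓ
      rw [mul_smul_comm, trace_smul, smul_eq_mul]
      congr 1
      calc (S * (B ℓ * (B ℓ)ᵀ)).trace = ((B ℓ * (B ℓ)ᵀ) * S).trace := trace_mul_comm _ _
      _ = (B ℓ * ((B ℓ)ᵀ * S)).trace := by rw [Matrix.mul_assoc]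
      _ = (((B ℓ)ᵀ * S) * B ℓ).trace := trace_mul_comm _ _
    calc (S * N).trace = ∑ ℓ, (S * (w ℓ • (B ℓ * (B ℓ)ᵀ))).trace := by
          rw [hN, Finset.mul_sum, trace_sum]
    _ = ∑ ℓ, w ℓ * ((B ℓ)ᵀ * S * B ℓ).trace := Finset.sum_congr rfl fun ℓ _ => step ℓ
    _ ≤ ∑ ℓ, w ℓ * α := Finset.sum_le_sum fun ℓ _ => mul_le_mul_of_nonneg_left (hα ℓ) (hw0 ℓ)
    _ = α := by rw [← Finset.sum_mul, hw1, one_mul]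
  calc (Xᵀ * S * X).trace = (S * (X * Xᵀ)).trace := t0
  _ ≤ lam * (S * N).trace := t2
  _ ≤ lam * α := mul_le_mul_of_nonneg_left t3 hlam0
  _ = α * lam := mul_comm _ _
end

section
/- Let B₁,…,B_K be real matrices with B_ℓ of size m×s_ℓ, let B = (B₁,…,B_K) be the m×(Σ_ℓ s_ℓ) concatenated matrix, and assume the column space of B is all of ℝ^m (i.e., B has full row rank). Fix j ∈ {1,…,m}. Write B⁺ e_j = (h₁',…,h_K')' with h_ℓ ∈ ℝ^{s_ℓ}, set S_j = Σ_ℓ ‖h_ℓ‖ and define the weight vector w with w_ℓ = ‖h_ℓ‖/S_j. Then e_j lies in the column space of N(w) = Σ_ℓ w_ℓ B_ℓ B_ℓ'. -/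
open Matrix

/-- The column space of `A * Aᵀ` equals that of `A`. -/
lemma colSpace_self_mul_transpose {m n : Type*} [Fintype m] [Fintype n]
    (A : Matrix m n ℝ) : colSpace (A * Aᵀ) = colSpace A := by
  apply Submodule.eq_of_le_of_finrank_eq
  · rw [colSpace, Matrix.mulVecLin_mul]
    exact LinearMap.range_comp_le_range _ _
  · exact A.rank_self_mul_transpose

/-- Lemma 2 (key part): with B = (B₁,…,B_K) of full row rank, h = B⁺e_j split into
blocks h_ℓ, S_j = Σ_ℓ ‖h_ℓ‖ and w_ℓ = ‖h_ℓ‖/S_j, the vector e_j lies in the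
column space of N(w) = Σ_ℓ w_ℓ B_ℓ B_ℓ'. -/
theorem single_mem_colSpace_MoorePenrose_design
    {m K : ℕ} {s : Fin K → ℕ}
    (Bs : (ℓ : Fin K) → Matrix (Fin m) (Fin (s ℓ)) ℝ)
    (B : Matrix (Fin m) ((ℓ : Fin K) × Fin (s ℓ)) ℝ)
    (hB : B = Matrix.of fun i p => Bs p.1 i p.2)
    (hrank : colSpace B = ⊤)
    (Bplus : Matrix ((ℓ : Fin K) × Fin (s ℓ)) (Fin m) ℝ)
    (hBplus : IsMoorePenrose B Bplus)
    (j : Fin m)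
    (h : ((ℓ : Fin K) × Fin (s ℓ)) → ℝ) (hh : h = Bplus.mulVec (Pi.single j 1))
    (nrm : Fin K → ℝ) (hnrm : ∀ ℓ, nrm ℓ = Real.sqrt (∑ i, (h ⟨ℓ, i⟩) ^ 2))
    (Sj : ℝ) (hSj : Sj = ∑ ℓ, nrm ℓ)
    (w : Fin K → ℝ) (hw : ∀ ℓ, w ℓ = nrm ℓ / Sj) :
    Pi.single j 1 ∈ colSpace (∑ ℓ, w ℓ • (Bs ℓ * (Bs ℓ)ᵀ)) := by
  classical
  -- e_j is in the column space of B, so B B⁺ e_j = e_j, i.e. B.mulVec h = e_j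
  have hej : B.mulVec h = Pi.single j 1 := by
    have : Pi.single j 1 ∈ colSpace B := by rw [hrank]; trivial
    obtain ⟨y, hy⟩ := this
    rw [hh, Matrix.mulVec_mulVec, ← hy]
    calc (B * Bplus).mulVec (B.mulVecLin y)
        = (B * Bplus * B).mulVec y := by
          simp [Matrix.mulVecLin_apply, Matrix.mulVec_mulVec]
      _ = B.mulVecLin y := by rw [hBplus.1]; rfl
  -- norms are nonnegative
  have hnrm_nonneg : ∀ ℓ, 0 ≤ nrm ℓ := fun ℓ => (hnrm ℓ) ▸ Real.sqrt_nonneg _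
  -- Sj ≠ 0
  have hSj_ne : Sj ≠ 0 := by
    intro h0
    have hall : ∀ ℓ, nrm ℓ = 0 := by
      intro ℓ
      have := (Finset.sum_eq_zero_iff_of_nonneg
        (fun ℓ _ => hnrm_nonneg ℓ)).mp (hSj ▸ h0)
      exact this ℓ (Finset.mem_univ ℓ)
    have hzero : ∀ p : (ℓ : Fin K) × Fin (s ℓ), h p = 0 := by
      rintro ⟨ℓ, i⟩
      have h1 : Real.sqrt (∑ i, (h ⟨ℓ, i⟩) ^ 2) = 0 := (hnrm ℓ) ▸ hall ℓ
      have h2 : (∑ i, (h ⟨ℓ, i⟩) ^ 2) = 0 := by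
        have hnn : 0 ≤ ∑ i, (h ⟨ℓ, i⟩) ^ 2 :=
          Finset.sum_nonneg fun i _ => sq_nonneg _
        nlinarith [Real.sq_sqrt hnn, h1]
      have := (Finset.sum_eq_zero_iff_of_nonneg
        (fun i _ => sq_nonneg (h ⟨ℓ, i⟩))).mp h2 i (Finset.mem_univ i)
      exact pow_eq_zero_iff two_ne_zero |>.mp this
    have : (Pi.single j 1 : Fin m → ℝ) = 0 := by
      rw [← hej]
      have : h = 0 := funext hzero
      rw [this, Matrix.mulVec_zero]
    have h1 : (Pi.single j 1 : Fin m → ℝ) j = 0 := by rw [this]; rfl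
    simp at h1
  -- w ℓ nonneg, and h vanishes on blocks with w ℓ = 0
  have hw_nonneg : ∀ ℓ, 0 ≤ w ℓ := by
    intro ℓ
    rw [hw ℓ, hSj]
    have : 0 ≤ ∑ ℓ, nrm ℓ := Finset.sum_nonneg fun ℓ _ => hnrm_nonneg ℓ
    exact div_nonneg (hnrm_nonneg ℓ) this
  have hwzero : ∀ p : (ℓ : Fin K) × Fin (s ℓ), w p.1 = 0 → h p = 0 := by
    rintro ⟨ℓ, i⟩ h0
    have hn0 : nrm ℓ = 0 := by
      have := hw ℓ
      rw [h0] at this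
      field_simp at this
      simpa using this.symm
    have h1 : Real.sqrt (∑ i, (h ⟨ℓ, i⟩) ^ 2) = 0 := (hnrm ℓ) ▸ hn0
    have hnn : 0 ≤ ∑ i, (h ⟨ℓ, i⟩) ^ 2 := Finset.sum_nonneg fun i _ => sq_nonneg _
    have h2 : (∑ i, (h ⟨ℓ, i⟩) ^ 2) = 0 := by nlinarith [Real.sq_sqrt hnn, h1]
    have := (Finset.sum_eq_zero_iff_of_nonneg
      (fun i _ => sq_nonneg (h ⟨ℓ, i⟩))).mp h2 i (Finset.mem_univ i)
    exact pow_eq_zero_iff two_ne_zero |>.mp this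
  -- the scaled concatenated matrix A
  set A : Matrix (Fin m) ((ℓ : Fin K) × Fin (s ℓ)) ℝ :=
    Matrix.of fun i p => Real.sqrt (w p.1) * Bs p.1 i p.2 with hA
  -- N(w) = A * Aᵀ
  have hN : (∑ ℓ, w ℓ • (Bs ℓ * (Bs ℓ)ᵀ)) = A * Aᵀ := by
    ext i i'
    simp only [Matrix.sum_apply, Matrix.smul_apply, Matrix.mul_apply,
      Matrix.transpose_apply, smul_eq_mul, hA, Matrix.of_apply]
    rw [← Finset.univ_sigma_univ, Finset.sum_sigma]
    refine Finset.sum_congr rfl fun ℓ _ => ?_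
    rw [Finset.mul_sum]
    refine Finset.sum_congr rfl fun t _ => ?_
    have : Real.sqrt (w ℓ) * Real.sqrt (w ℓ) = w ℓ :=
      Real.mul_self_sqrt (hw_nonneg ℓ)
    ring_nf
    rw [Real.sq_sqrt (hw_nonneg ℓ)]
    ring
  rw [hN, colSpace_self_mul_transpose]
  -- e_j = A x with x p = h p / √(w p.1) (0 on zero-weight blocks)
  refine ⟨fun p => if w p.1 = 0 then 0 else h p / Real.sqrt (w p.1), ?_⟩
  rw [← hej]
  ext i
  simp only [Matrix.mulVecLin_apply, Matrix.mulVec, dotProduct, hA,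
    Matrix.of_apply, hB]
  refine Finset.sum_congr rfl fun p _ => ?_
  by_cases h0 : w p.1 = 0
  · simp [h0, hwzero p h0]
  · have hs : Real.sqrt (w p.1) ≠ 0 :=
      Real.sqrt_ne_zero'.mpr (lt_of_le_of_ne (hw_nonneg p.1) (Ne.symm h0))
    rw [if_neg h0]
    field_simp
end

section
/- Let F be an m×n real matrix with full row rank m, and let Σ be an m×m real symmetric positive semidefinite matrix satisfying tr(F' Σ F) ≤ α. Then for all j, k ∈ {1,…,m}, |Σ_{jk}| ≤ α √((FF')⁻¹_{jj} (FF')⁻¹_{kk}). -/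
open Matrix

/-- I-optimality covariance bound (Type I): if F has full row rank and S is PSD
with tr(F' S F) ≤ α, then |S_{jk}| ≤ α √((FF')⁻¹_{jj} (FF')⁻¹_{kk}). -/
theorem iOptimality_typeI_bound {m n : ℕ}
    (F : Matrix (Fin m) (Fin n) ℝ) (hF : F.rank = m)
    (S : Matrix (Fin m) (Fin m) ℝ) (hS : S.PosSemidef) (α : ℝ)
    (htr : (Fᵀ * S * F).trace ≤ α) (j k : Fin m) :
    |S j k| ≤ α * Real.sqrt ((F * Fᵀ)⁻¹ j j * (F * Fᵀ)⁻¹ k k) := by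
  classical
  set N : Matrix (Fin m) (Fin m) ℝ := F * Fᵀ with hN
  -- N is invertible
  have hNrank : N.rank = Fintype.card (Fin m) := by
    rw [hN, Matrix.rank_self_mul_transpose, hF, Fintype.card_fin]
  have hNunit : IsUnit N := by
    rw [← Matrix.mulVec_surjective_iff_isUnit]
    have hrange : LinearMap.range N.mulVecLin = ⊤ := by
      apply Submodule.eq_top_of_finrank_eq
      rw [← Matrix.rank, hNrank, Module.finrank_fintype_fun_eq_card]
    intro v
    have := LinearMap.range_eq_top.mp hrange v
    simpa [Matrix.mulVecLin_apply] using this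
  have hNdet : IsUnit N.det := (Matrix.isUnit_iff_isUnit_det N).mp hNunit
  have hNmul : N * N⁻¹ = 1 := Matrix.mul_nonsing_inv N hNdet
  have hNinvmul : N⁻¹ * N = 1 := Matrix.nonsing_inv_mul N hNdet
  have hNT : Nᵀ = N := by rw [hN, Matrix.transpose_mul, Matrix.transpose_transpose]
  have hNinvT : N⁻¹ᵀ = N⁻¹ := by rw [Matrix.transpose_nonsing_inv, hNT]
  -- decompose S
  obtain ⟨A, hA⟩ : ∃ A : Matrix (Fin m) (Fin m) ℝ, S = Aᴴ * A := by
    open scoped MatrixOrder in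
    exact CStarAlgebra.nonneg_iff_eq_star_mul_self.mp hS.nonneg
  have hAT : Aᴴ = Aᵀ := Matrix.conjTranspose_eq_transpose_of_trivial A
  rw [hAT] at hA
  set B : Matrix (Fin m) (Fin n) ℝ := A * F with hB
  -- trace as sum of squares
  have htr' : (Fᵀ * S * F).trace = ∑ l, ∑ i, B i l ^ 2 := by
    have h1 : Fᵀ * S * F = Bᵀ * B := by
      rw [hA, hB, Matrix.transpose_mul]
      rw [Matrix.mul_assoc, Matrix.mul_assoc, Matrix.mul_assoc]
    rw [h1]
    simp [Matrix.trace, Matrix.diag, Matrix.mul_apply, sq]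
  set t : ℝ := ∑ l, ∑ i, B i l ^ 2 with ht
  have htnn : 0 ≤ t :=
    Finset.sum_nonneg fun l _ => Finset.sum_nonneg fun i _ => sq_nonneg _
  have htα : t ≤ α := by rw [← htr']; exact htr
  have hα : 0 ≤ α := le_trans htnn htα
  -- column reconstruction matrix
  set C : Matrix (Fin n) (Fin m) ℝ := Fᵀ * N⁻¹ with hC
  have hBC : B * C = A := by
    rw [hB, hC, Matrix.mul_assoc, ← Matrix.mul_assoc F, ← hN, hNmul, Matrix.mul_one]
  have hCC : Cᵀ * C = N⁻¹ := by
    rw [hC, Matrix.transpose_mul, Matrix.transpose_transpose, hNinvT]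
    rw [Matrix.mul_assoc, ← Matrix.mul_assoc F, ← hN, hNmul, Matrix.mul_one]
  -- entries of N⁻¹ on the diagonal as sums of squares
  have hNinvdiag : ∀ p : Fin m, N⁻¹ p p = ∑ l, C l p ^ 2 := by
    intro p
    rw [← hCC]
    simp [Matrix.mul_apply, Matrix.transpose_apply, sq]
  have hNinvnn : ∀ p : Fin m, 0 ≤ N⁻¹ p p := fun p => by
    rw [hNinvdiag p]; exact Finset.sum_nonneg fun l _ => sq_nonneg _
  -- diagonal entries of S as sums of squares
  have hSdiag : ∀ p q : Fin m, S p q = ∑ i, A i p * A i q := by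
    intro p q
    rw [hA]
    simp [Matrix.mul_apply, Matrix.transpose_apply]
  -- column of A via B
  have hcol : ∀ (p : Fin m) (i : Fin m), A i p = ∑ l, B i l * C l p := by
    intro p i
    rw [← hBC]
    simp [Matrix.mul_apply]
  -- key diagonal bound
  have key : ∀ p : Fin m, S p p ≤ α * N⁻¹ p p := by
    intro p
    have h1 : S p p = ∑ i, (∑ l, B i l * C l p) ^ 2 := by
      rw [hSdiag p p]
      exact Finset.sum_congr rfl fun i _ => by rw [← hcol p i, sq]
    have h2 : ∀ i : Fin m, (∑ l, B i l * C l p) ^ 2 ≤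
        (∑ l, B i l ^ 2) * (∑ l, C l p ^ 2) := fun i =>
      Finset.sum_mul_sq_le_sq_mul_sq _ _ _
    calc S p p ≤ ∑ i, (∑ l, B i l ^ 2) * (∑ l, C l p ^ 2) := by
          rw [h1]; exact Finset.sum_le_sum fun i _ => h2 i
      _ = t * N⁻¹ p p := by
          rw [← Finset.sum_mul, hNinvdiag p, ht, Finset.sum_comm]
      _ ≤ α * N⁻¹ p p := mul_le_mul_of_nonneg_right htα (hNinvnn p)
  -- off-diagonal Cauchy-Schwarz
  have hSnn : ∀ p : Fin m, 0 ≤ S p p := fun p => by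
    rw [hSdiag p p]
    exact Finset.sum_nonneg fun i _ => mul_self_nonneg _
  have hSjk : (S j k) ^ 2 ≤ S j j * S k k := by
    rw [hSdiag j k, hSdiag j j, hSdiag k k]
    have h := Finset.sum_mul_sq_le_sq_mul_sq Finset.univ (fun i => A i j) (fun i => A i k)
    simpa [sq] using h
  have h3 : (S j k) ^ 2 ≤ (α * N⁻¹ j j) * (α * N⁻¹ k k) :=
    hSjk.trans (mul_le_mul (key j) (key k) (hSnn k)
      (mul_nonneg hα (hNinvnn j)))
  calc |S j k| = Real.sqrt ((S j k) ^ 2) := (Real.sqrt_sq_eq_abs _).symm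
    _ ≤ Real.sqrt ((α * N⁻¹ j j) * (α * N⁻¹ k k)) := Real.sqrt_le_sqrt h3
    _ = α * Real.sqrt (N⁻¹ j j * N⁻¹ k k) := by
        rw [show (α * N⁻¹ j j) * (α * N⁻¹ k k) = α ^ 2 * (N⁻¹ j j * N⁻¹ k k) by ring,
          Real.sqrt_mul (sq_nonneg α), Real.sqrt_sq hα]
end

section
/- Let F be an m×n real matrix with full row rank m, and let Σ be an m×m real symmetric positive semidefinite matrix satisfying tr(F' Σ F) ≤ α. Then for all j ≠ k, |Σ_{jk}| ≤ (α/2)·λ_max(E_{jk}' (FF')⁻¹ E_{jk}), where E_{jk} = (e_j, e_k) is the m×2 matrix whose columns are the j-th and k-th standard unit vectors. -/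
open Matrix

/-- The m×2 matrix E_{jk} = (e_j, e_k). -/
def Ejk {m : ℕ} (j k : Fin m) : Matrix (Fin m) (Fin 2) ℝ :=
  Matrix.of fun i p => if p = 0 then (Pi.single j 1 : Fin m → ℝ) i
    else (Pi.single k 1 : Fin m → ℝ) i

lemma trace_nonneg_of_psd {m : ℕ} {M : Matrix (Fin m) (Fin m) ℝ} (hM : M.PosSemidef) :
    0 ≤ M.trace := by
  rw [Matrix.trace]
  refine Finset.sum_nonneg fun i _ => ?_
  have h := hM.dotProduct_mulVec_nonneg (Pi.single i 1)
  simpa [single_dotProduct, Matrix.mulVec_single] using h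

lemma trace_mul_psd_nonneg {m : ℕ} {P C : Matrix (Fin m) (Fin m) ℝ}
    (hP : P.PosSemidef) (hC : C.PosSemidef) : 0 ≤ (P * C).trace := by
  obtain ⟨R, hR, h1⟩ : ∃ R : Matrix (Fin m) (Fin m) ℝ, R.PosSemidef ∧ P = R * R := by
    open scoped MatrixOrder in
    exact ⟨CFC.sqrt P, (CFC.sqrt_nonneg P).posSemidef, (CFC.sqrt_mul_sqrt_self P hP.nonneg).symm⟩
  have h2 : (R * R * C).trace = (R * C * R).trace := by
    rw [Matrix.trace_mul_cycle R C R]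
  have h3 : (R * C * R).PosSemidef := by
    have := hC.mul_mul_conjTranspose_same R
    rwa [hR.isHermitian.eq] at this
  calc (0:ℝ) ≤ (R * C * R).trace := trace_nonneg_of_psd h3
  _ = (P * C).trace := by rw [← h2, ← h1]

lemma psd_cauchy {m : ℕ} {A : Matrix (Fin m) (Fin m) ℝ} (hA : A.PosSemidef)
    (x y : Fin m → ℝ) :
    (y ⬝ᵥ A *ᵥ x) ^ 2 ≤ (y ⬝ᵥ A *ᵥ y) * (x ⬝ᵥ A *ᵥ x) := by
  have hAT : Aᵀ = A := by
    rw [← Matrix.conjTranspose_eq_transpose_of_trivial, hA.isHermitian.eq]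
  have hsymm : ∀ u v : Fin m → ℝ, u ⬝ᵥ A *ᵥ v = v ⬝ᵥ A *ᵥ u := by
    intro u v
    rw [Matrix.dotProduct_mulVec, ← Matrix.mulVec_transpose, hAT, dotProduct_comm]
  have key : ∀ t : ℝ, 0 ≤ (y ⬝ᵥ A *ᵥ y) * (t * t) + (2 * (y ⬝ᵥ A *ᵥ x)) * t + (x ⬝ᵥ A *ᵥ x) := by
    intro t
    have h := hA.dotProduct_mulVec_nonneg (x + t • y)
    have hst : star (x + t • y) = x + t • y := by simp
    rw [hst] at h
    have hexp : (x + t • y) ⬝ᵥ A *ᵥ (x + t • y)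
        = (y ⬝ᵥ A *ᵥ y) * (t * t) + (2 * (y ⬝ᵥ A *ᵥ x)) * t + (x ⬝ᵥ A *ᵥ x) := by
      rw [Matrix.mulVec_add, Matrix.mulVec_smul, add_dotProduct, smul_dotProduct,
        dotProduct_add, dotProduct_add, dotProduct_smul,
        dotProduct_smul, hsymm x y]
      simp only [smul_eq_mul]
      ring
    rw [hexp] at h
    exact h
  have hd := discrim_le_zero key
  rw [discrim] at hd
  nlinarith [hd]

lemma dot_self_pos {r : ℕ} {v : Fin r → ℝ} (hv : v ≠ 0) : 0 < v ⬝ᵥ v := by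
  have h0 : 0 ≤ v ⬝ᵥ v := Finset.sum_nonneg fun i _ => mul_self_nonneg _
  rcases h0.lt_or_eq with h | h
  · exact h
  · exact absurd (dotProduct_self_eq_zero.mp h.symm) hv

lemma rayleigh_le_maxEigenvalue {r : ℕ} (hr : 0 < r) {M : Matrix (Fin r) (Fin r) ℝ}
    (hM : M.IsHermitian) (x : Fin r → ℝ) :
    x ⬝ᵥ M *ᵥ x ≤ maxEigenvalue M * (x ⬝ᵥ x) := by
  haveI : Nonempty (Fin r) := ⟨⟨0, hr⟩⟩
  have hMT : Mᵀ = M := by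
    rw [← Matrix.conjTranspose_eq_transpose_of_trivial, hM.eq]
  obtain ⟨I, hI⟩ := Finite.exists_max hM.eigenvalues
  set b := hM.eigenvectorBasis with hb
  set u : Fin r → (Fin r → ℝ) := fun i => WithLp.equiv 2 (Fin r → ℝ) (b i) with hu
  have heig : ∀ i, M *ᵥ u i = hM.eigenvalues i • u i := fun i => hM.mulVec_eigenvectorBasis i
  have hsymm : ∀ (w z : Fin r → ℝ), w ⬝ᵥ M *ᵥ z = (M *ᵥ w) ⬝ᵥ z := by
    intro w z
    rw [Matrix.dotProduct_mulVec, ← Matrix.mulVec_transpose, hMT]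
  have inner_dot : ∀ (X Y : EuclideanSpace ℝ (Fin r)),
      (inner ℝ X Y : ℝ) = WithLp.equiv 2 (Fin r → ℝ) X ⬝ᵥ WithLp.equiv 2 (Fin r → ℝ) Y := by
    intro X Y
    rw [EuclideanSpace.inner_eq_star_dotProduct, star_trivial]
    exact dotProduct_comm _ _
  -- quadratic form bound
  have quad : ∀ y : Fin r → ℝ, y ⬝ᵥ M *ᵥ y ≤ hM.eigenvalues I * (y ⬝ᵥ y) := by
    intro y
    set Y : EuclideanSpace ℝ (Fin r) := (WithLp.equiv 2 (Fin r → ℝ)).symm y with hY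
    have hYy : WithLp.equiv 2 (Fin r → ℝ) Y = y := rfl
    set MY : EuclideanSpace ℝ (Fin r) := (WithLp.equiv 2 (Fin r → ℝ)).symm (M *ᵥ y) with hMY
    have hMYy : WithLp.equiv 2 (Fin r → ℝ) MY = M *ᵥ y := rfl
    have h1 := b.sum_inner_mul_inner Y MY
    simp only [inner_dot, hYy, hMYy] at h1
    have h2 : ∀ i, (u i) ⬝ᵥ (M *ᵥ y) = hM.eigenvalues i * ((u i) ⬝ᵥ y) := by
      intro i
      rw [hsymm, heig, smul_dotProduct, smul_eq_mul]
    have h3 : y ⬝ᵥ M *ᵥ y = ∑ i, hM.eigenvalues i * ((u i) ⬝ᵥ y)^2 := by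
      rw [← h1]
      refine Finset.sum_congr rfl fun i _ => ?_
      rw [h2 i, dotProduct_comm y (u i)]
      ring
    have h4 : y ⬝ᵥ y = ∑ i, ((u i) ⬝ᵥ y)^2 := by
      have h5 := b.sum_inner_mul_inner Y Y
      simp only [inner_dot, hYy] at h5
      rw [← h5]
      refine Finset.sum_congr rfl fun i _ => ?_
      rw [dotProduct_comm y (u i)]
      ring
    rw [h3, h4, Finset.mul_sum]
    exact Finset.sum_le_sum fun i _ => mul_le_mul_of_nonneg_right (hI i) (sq_nonneg _)
  -- the eigenvalue set
  have hmem : hM.eigenvalues I ∈ {t : ℝ | ∃ v : Fin r → ℝ, v ≠ 0 ∧ M.mulVec v = t • v} := by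
    refine ⟨u I, ?_, heig I⟩
    intro h0
    have huI : (b I : EuclideanSpace ℝ (Fin r)) ≠ 0 := b.orthonormal.ne_zero I
    apply huI
    ext i
    exact congrFun h0 i
  have hub : ∀ t ∈ {t : ℝ | ∃ v : Fin r → ℝ, v ≠ 0 ∧ M.mulVec v = t • v},
      t ≤ hM.eigenvalues I := by
    rintro t ⟨v, hv, hEq⟩
    have hvv : 0 < v ⬝ᵥ v := dot_self_pos hv
    have hle : t * (v ⬝ᵥ v) ≤ hM.eigenvalues I * (v ⬝ᵥ v) := by
      have h6 : v ⬝ᵥ M *ᵥ v = t * (v ⬝ᵥ v) := by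
        rw [hEq, dotProduct_smul, smul_eq_mul]
      rw [← h6]; exact quad v
    exact le_of_mul_le_mul_right hle hvv
  have hle : hM.eigenvalues I ≤ maxEigenvalue M :=
    le_csSup ⟨hM.eigenvalues I, hub⟩ hmem
  calc x ⬝ᵥ M *ᵥ x ≤ hM.eigenvalues I * (x ⬝ᵥ x) := quad x
  _ ≤ maxEigenvalue M * (x ⬝ᵥ x) := by
      apply mul_le_mul_of_nonneg_right hle
      exact Finset.sum_nonneg fun i _ => mul_self_nonneg _

lemma dot_vecMulVec {m : ℕ} (v x : Fin m → ℝ) :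
    x ⬝ᵥ (vecMulVec v v) *ᵥ x = (v ⬝ᵥ x) * (v ⬝ᵥ x) := by
  simp only [dotProduct, Matrix.mulVec, Matrix.vecMulVec_apply, dotProduct,
    Finset.mul_sum, Finset.sum_mul]
  rw [Finset.sum_comm]
  refine Finset.sum_congr rfl fun i _ => Finset.sum_congr rfl fun l _ => by ring

lemma trace_mul_vecMulVec {m : ℕ} (S : Matrix (Fin m) (Fin m) ℝ) (v : Fin m → ℝ) :
    (S * vecMulVec v v).trace = v ⬝ᵥ S *ᵥ v := by
  simp only [Matrix.trace, Matrix.diag, Matrix.mul_apply, Matrix.vecMulVec_apply,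
    dotProduct, Matrix.mulVec, Finset.mul_sum]
  refine Finset.sum_congr rfl fun i _ => Finset.sum_congr rfl fun l _ => by ring

/-- I-optimality covariance bound (Type II): if F has full row rank and S is PSD
with tr(F' S F) ≤ α, then for j ≠ k,
|S_{jk}| ≤ (α/2)·λ_max(E_{jk}' (FF')⁻¹ E_{jk}). -/
theorem iOptimality_typeII_bound {m n : ℕ}
    (F : Matrix (Fin m) (Fin n) ℝ) (hF : F.rank = m)
    (S : Matrix (Fin m) (Fin m) ℝ) (hS : S.PosSemidef) (α : ℝ)
    (htr : (Fᵀ * S * F).trace ≤ α) (j k : Fin m) (hjk : j ≠ k) :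
    |S j k| ≤ α / 2 * maxEigenvalue ((Ejk j k)ᵀ * (F * Fᵀ)⁻¹ * Ejk j k) := by
  set A := F * Fᵀ with hA_def
  -- Fᵀ has trivial kernel
  have hkerT : ∀ x : Fin m → ℝ, Fᵀ *ᵥ x = 0 → x = 0 := by
    intro x hx
    have hrankT : Fᵀ.rank = m := by rw [Matrix.rank_transpose]; exact hF
    have h1 := LinearMap.finrank_range_add_finrank_ker (Fᵀ).mulVecLin
    have h2 : Module.finrank ℝ (Fin m → ℝ) = m := by simp
    have h3 : Module.finrank ℝ (LinearMap.range (Fᵀ).mulVecLin) = m := hrankT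
    have h4 : Module.finrank ℝ (LinearMap.ker (Fᵀ).mulVecLin) = 0 := by omega
    have h5 : LinearMap.ker (Fᵀ).mulVecLin = ⊥ := Submodule.finrank_eq_zero.mp h4
    have hx' : x ∈ LinearMap.ker (Fᵀ).mulVecLin := by
      rw [LinearMap.mem_ker, Matrix.mulVecLin_apply]
      exact hx
    rw [h5] at hx'
    simpa using hx'
  -- A is positive definite
  have hApd : A.PosDef := by
    refine Matrix.posDef_iff_dotProduct_mulVec.mpr ⟨?_, ?_⟩
    · have := Matrix.isHermitian_mul_conjTranspose_self F
      rwa [Matrix.conjTranspose_eq_transpose_of_trivial] at this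
    · intro x hx
      have hq : star x ⬝ᵥ A *ᵥ x = (Fᵀ *ᵥ x) ⬝ᵥ (Fᵀ *ᵥ x) := by
        rw [star_trivial, hA_def, ← Matrix.mulVec_mulVec, Matrix.dotProduct_mulVec,
          ← Matrix.mulVec_transpose]
      rw [hq]
      apply dot_self_pos
      intro h0
      exact hx (hkerT x h0)
  have hAT : Aᵀ = A := by
    rw [← Matrix.conjTranspose_eq_transpose_of_trivial, hApd.isHermitian.eq]
  have hGpd : A⁻¹.PosDef := hApd.inv
  have hGT : A⁻¹ᵀ = A⁻¹ := by
    rw [← Matrix.conjTranspose_eq_transpose_of_trivial, hGpd.isHermitian.eq]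
  -- trace bound
  have htr' : (S * A).trace ≤ α := by
    have : (Fᵀ * S * F).trace = (S * A).trace := by
      rw [hA_def, Matrix.trace_mul_cycle Fᵀ S F, Matrix.trace_mul_comm]
    rwa [this] at htr
  have htrnn : 0 ≤ (S * A).trace := trace_mul_psd_nonneg hS hApd.posSemidef
  have hα : 0 ≤ α := le_trans htrnn htr'
  -- the key bound for v := e_j + σ e_k
  set E := Ejk j k with hE_def
  set L := maxEigenvalue (Eᵀ * A⁻¹ * E) with hL_def
  have hMH : (Eᵀ * A⁻¹ * E).IsHermitian := by
    rw [Matrix.IsHermitian, Matrix.conjTranspose_eq_transpose_of_trivial,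
      Matrix.transpose_mul, Matrix.transpose_mul, Matrix.transpose_transpose, hGT,
      Matrix.mul_assoc]
  have hSkj : S k j = S j k := by
    have := hS.isHermitian.apply j k
    simpa using this
  have key : ∀ σ : ℝ, σ * σ = 1 →
      0 ≤ S j j + σ * (S j k + S k j) + S k k ∧
      S j j + σ * (S j k + S k j) + S k k ≤ 4 * (α / 2 * L) := by
    intro σ hσ
    set w : Fin 2 → ℝ := ![1, σ] with hw_def
    set v : Fin m → ℝ := (Pi.single j 1 : Fin m → ℝ) + σ • (Pi.single k 1 : Fin m → ℝ) with hv_def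
    have hEw : E *ᵥ w = v := by
      funext i
      simp [hE_def, Ejk, Matrix.mulVec, dotProduct, Fin.sum_univ_two, hw_def, hv_def,
        Fin.one_eq_zero_iff, mul_comm]
    have hvj : v j = 1 := by
      simp [hv_def, Pi.single_eq_same, Pi.single_eq_of_ne hjk]
    have hvne : v ≠ 0 := fun h0 => by simp [h0] at hvj
    -- expansion of quadratic forms in v
    have hexpand : ∀ T : Matrix (Fin m) (Fin m) ℝ,
        v ⬝ᵥ T *ᵥ v = T j j + σ * (T j k + T k j) + (σ * σ) * T k k := by
      intro T
      have hsingle : ∀ p q : Fin m, (Pi.single p (1:ℝ)) ⬝ᵥ T *ᵥ (Pi.single q 1) = T p q := by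
        intro p q
        rw [Matrix.mulVec_single, single_dotProduct]
        simp
      rw [hv_def, Matrix.mulVec_add, Matrix.mulVec_smul, add_dotProduct,
        smul_dotProduct, dotProduct_add, dotProduct_add,
        dotProduct_smul, dotProduct_smul, hsingle j j, hsingle j k,
        hsingle k j, hsingle k k]
      simp only [smul_eq_mul]
      ring
    -- q and c
    set q := v ⬝ᵥ S *ᵥ v with hq_def
    set c := v ⬝ᵥ A⁻¹ *ᵥ v with hc_def
    have hq0 : 0 ≤ q := by
      have := hS.dotProduct_mulVec_nonneg v
      rwa [star_trivial] at this
    have hc0 : 0 < c := by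
      have := hGpd.dotProduct_mulVec_pos hvne
      rwa [star_trivial] at this
    -- Cauchy–Schwarz: c • A - v vᵀ is PSD
    have hCpsd : (c • A - vecMulVec v v).PosSemidef := by
      refine Matrix.posSemidef_iff_dotProduct_mulVec.mpr ⟨?_, ?_⟩
      · rw [Matrix.IsHermitian, Matrix.conjTranspose_eq_transpose_of_trivial,
          Matrix.transpose_sub, Matrix.transpose_smul, hAT]
        congr 1
        ext a b
        simp [Matrix.vecMulVec_apply, mul_comm]
      · intro x
        rw [star_trivial]
        have hy : A *ᵥ (A⁻¹ *ᵥ v) = v := by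
          rw [Matrix.mulVec_mulVec,
            Matrix.mul_nonsing_inv A ((Matrix.isUnit_iff_isUnit_det A).mp hApd.isUnit),
            Matrix.one_mulVec]
        set y := A⁻¹ *ᵥ v with hy_def
        have hyAx : ∀ z : Fin m → ℝ, y ⬝ᵥ A *ᵥ z = v ⬝ᵥ z := by
          intro z
          rw [Matrix.dotProduct_mulVec, ← Matrix.mulVec_transpose, hAT, hy]
        have hyAy : y ⬝ᵥ A *ᵥ y = c := by
          rw [hyAx y, hc_def, dotProduct_comm]
        have hcs := psd_cauchy hApd.posSemidef x y
        rw [hyAy, hyAx x] at hcs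
        have hxpand : x ⬝ᵥ (c • A - vecMulVec v v) *ᵥ x
            = c * (x ⬝ᵥ A *ᵥ x) - (v ⬝ᵥ x) * (v ⬝ᵥ x) := by
          rw [Matrix.sub_mulVec, dotProduct_sub, Matrix.smul_mulVec,
            dotProduct_smul, smul_eq_mul, dot_vecMulVec]
        rw [hxpand]
        nlinarith [hcs]
    -- q ≤ tr(S A) * c
    have htrace_ineq : 0 ≤ (S * (c • A - vecMulVec v v)).trace :=
      trace_mul_psd_nonneg hS hCpsd
    have htrace_eq : (S * (c • A - vecMulVec v v)).trace = c * (S * A).trace - q := by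
      rw [Matrix.mul_sub, Matrix.mul_smul, Matrix.trace_sub, Matrix.trace_smul,
        trace_mul_vecMulVec, smul_eq_mul, hq_def]
    have hqc : q ≤ (S * A).trace * c := by
      rw [htrace_eq] at htrace_ineq
      nlinarith [htrace_ineq]
    have hqαc : q ≤ α * c := by
      calc q ≤ (S * A).trace * c := hqc
      _ ≤ α * c := mul_le_mul_of_nonneg_right htr' hc0.le
    -- c ≤ 2 L
    have hcM : w ⬝ᵥ (Eᵀ * A⁻¹ * E) *ᵥ w = c := by
      rw [Matrix.mul_assoc, ← Matrix.mulVec_mulVec, Matrix.dotProduct_mulVec w Eᵀ,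
        Matrix.vecMul_transpose, ← Matrix.mulVec_mulVec, hEw]
    have hww : w ⬝ᵥ w = 2 := by
      have h' : w ⬝ᵥ w = 1 * 1 + σ * σ := by
        simp [hw_def, dotProduct, Fin.sum_univ_two]
      rw [h', hσ]
      norm_num
    have hcL : c ≤ 2 * L := by
      have := rayleigh_le_maxEigenvalue (by norm_num) hMH w
      rw [hcM, hww] at this
      rw [hL_def]; linarith
    have hq2 : q ≤ 4 * (α / 2 * L) := by
      calc q ≤ α * c := hqαc
      _ ≤ α * (2 * L) := mul_le_mul_of_nonneg_left hcL hα
      _ = 4 * (α / 2 * L) := by ring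
    have hqval : q = S j j + σ * (S j k + S k j) + S k k := by
      rw [hq_def, hexpand S, hσ, one_mul]
    rw [hqval] at hq0 hq2
    exact ⟨hq0, hq2⟩
  have h1 := key 1 (by norm_num)
  have h2 := key (-1) (by norm_num)
  rw [hSkj] at h1 h2
  rw [abs_le]
  constructor
  · nlinarith [h1.1, h2.2]
  · nlinarith [h2.1, h1.2]
end

section
/- Let B₁,…,B_K be real matrices with B_ℓ of size m×s_ℓ and B = (B₁,…,B_K) of full row rank m. Let Σ be an m×m real symmetric positive semidefinite matrix with tr(B_ℓ' Σ B_ℓ) ≤ α for all ℓ = 1,…,K. Then for all j, k ∈ {1,…,m}, |Σ_{jk}| ≤ α K √((BB')⁻¹_{jj} (BB')⁻¹_{kk}). -/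
open Matrix

lemma herm_apply' {n : Type*} [Fintype n] {A : Matrix n n ℝ} (hA : A.IsHermitian) (i j : n) :
    A i j = A j i := by
  conv_lhs => rw [← hA]
  simp [conjTranspose_apply]

section PsdSqrt
open scoped MatrixOrder
lemma psd_sqrt_exists {n : Type*} [Fintype n] [DecidableEq n] {A : Matrix n n ℝ}
    (hA : A.PosSemidef) : ∃ R : Matrix n n ℝ, R.PosSemidef ∧ R * R = A :=
  ⟨CFC.sqrt A, (CFC.sqrt_nonneg A).posSemidef, CFC.sqrt_mul_sqrt_self A hA.nonneg⟩
end PsdSqrt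

lemma psd_diag_nonneg {n : Type*} [Fintype n] [DecidableEq n] {A : Matrix n n ℝ}
    (hA : A.PosSemidef) (j : n) : 0 ≤ A j j := by
  have := hA.dotProduct_mulVec_nonneg (Pi.single j 1)
  simpa [dotProduct, mulVec, Pi.single_apply] using this

lemma diag_le_trace_mul_inv {n : Type*} [Fintype n] [DecidableEq n]
    {S M : Matrix n n ℝ} (hS : S.PosSemidef) (hM : M.PosDef) (j : n) :
    S j j ≤ (S * M).trace * M⁻¹ j j := by
  obtain ⟨P, hP, hPP⟩ := psd_sqrt_exists hM.posSemidef
  have hPT : Pᵀ = P := by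
    ext a b; rw [transpose_apply]; exact herm_apply' hP.1 b a
  have hPdet : IsUnit P.det := by
    have h1 : P.det * P.det = M.det := by rw [← det_mul, hPP]
    have h2 : (0:ℝ) < M.det := hM.det_pos
    refine isUnit_iff_ne_zero.mpr fun h => ?_
    rw [h, mul_zero] at h1
    exact h2.ne' h1.symm
  obtain ⟨R, hR, hRR⟩ := psd_sqrt_exists hS
  have hRT : Rᵀ = R := by
    ext a b; rw [transpose_apply]; exact herm_apply' hR.1 b a
  have hSab : ∀ a b, S a b = ∑ i, R i a * R i b := by
    intro a b
    rw [← hRR, mul_apply]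
    exact Finset.sum_congr rfl fun i _ => by rw [herm_apply' hR.1 a i]
  have hPinvT : (P⁻¹)ᵀ = P⁻¹ := by rw [Matrix.transpose_nonsing_inv, hPT]
  have hMinv : M⁻¹ j j = ∑ t, (P⁻¹ t j) ^ 2 := by
    have h1 : M⁻¹ = P⁻¹ * P⁻¹ := by rw [← hPP, Matrix.mul_inv_rev]
    rw [h1, mul_apply]
    refine Finset.sum_congr rfl fun t _ => ?_
    have ht : P⁻¹ j t = P⁻¹ t j := by
      conv_lhs => rw [← hPinvT]
      rw [transpose_apply]
    rw [ht]; ring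
  have htr : (S * M).trace = ∑ i, ∑ t, ((R * P) i t) ^ 2 := by
    have e1 : S * M = (R * (R * P)) * P := by rw [← hPP, ← hRR]; noncomm_ring
    rw [e1, Matrix.trace_mul_comm, ← Matrix.mul_assoc, Matrix.trace]
    simp only [Matrix.diag_apply, Matrix.mul_apply]
    rw [Finset.sum_comm]
    refine Finset.sum_congr rfl fun i _ => Finset.sum_congr rfl fun t _ => ?_
    have h : (∑ x, P t x * R x i) = ∑ x, R i x * P x t :=
      Finset.sum_congr rfl fun x _ => by
        rw [herm_apply' hP.1 t x, herm_apply' hR.1 x i]; ring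
    rw [h]; ring
  have hRfac : R = R * P * P⁻¹ := (Matrix.mul_nonsing_inv_cancel_right P R hPdet).symm
  calc S j j = ∑ i, (R i j) ^ 2 := by
        rw [hSab]; exact Finset.sum_congr rfl fun i _ => by ring
    _ = ∑ i, (∑ t, (R * P) i t * P⁻¹ t j) ^ 2 := by
        refine Finset.sum_congr rfl fun i _ => ?_
        conv_lhs => rw [hRfac]
        rw [mul_apply]
    _ ≤ ∑ i, ((∑ t, ((R * P) i t) ^ 2) * ∑ t, (P⁻¹ t j) ^ 2) :=
        Finset.sum_le_sum fun i _ => Finset.sum_mul_sq_le_sq_mul_sq _ _ _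
    _ = (∑ i, ∑ t, ((R * P) i t) ^ 2) * ∑ t, (P⁻¹ t j) ^ 2 := by rw [← Finset.sum_mul]
    _ = (S * M).trace * M⁻¹ j j := by rw [htr, hMinv]

lemma psd_sq_apply_le {n : Type*} [Fintype n] [DecidableEq n] {S : Matrix n n ℝ}
    (hS : S.PosSemidef) (j k : n) : (S j k) ^ 2 ≤ S j j * S k k := by
  obtain ⟨R, hR, hRR⟩ := psd_sqrt_exists hS
  have hSab : ∀ a b, S a b = ∑ i, R i a * R i b := by
    intro a b
    rw [← hRR, mul_apply]
    exact Finset.sum_congr rfl fun i _ => by rw [herm_apply' hR.1 a i]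
  have h := Finset.sum_mul_sq_le_sq_mul_sq Finset.univ (fun i => R i j) (fun i => R i k)
  rw [hSab j k, hSab j j, hSab k k]
  calc (∑ i, R i j * R i k) ^ 2 ≤ (∑ i, (R i j) ^ 2) * ∑ i, (R i k) ^ 2 := h
    _ = (∑ i, R i j * R i j) * ∑ i, R i k * R i k := by
        rw [Finset.sum_congr rfl fun i _ => (sq (R i j) : (R i j)^2 = _),
          Finset.sum_congr rfl fun i _ => (sq (R i k) : (R i k)^2 = _)]

lemma trace_conj_nonneg {n p : Type*} [Fintype n] [Fintype p] {S : Matrix n n ℝ}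
    (hS : S.PosSemidef) (A : Matrix n p ℝ) : 0 ≤ (Aᵀ * S * A).trace := by
  rw [Matrix.trace]
  refine Finset.sum_nonneg fun t _ => ?_
  have h := hS.dotProduct_mulVec_nonneg (fun i => A i t)
  have e : (Aᵀ * S * A) t t = star (fun i => A i t) ⬝ᵥ (S *ᵥ fun i => A i t) := by
    simp only [Matrix.mul_apply, Matrix.transpose_apply, dotProduct, Matrix.mulVec,
      Pi.star_apply, star_trivial, dotProduct]
    simp_rw [Finset.sum_mul, Finset.mul_sum]
    rw [Finset.sum_comm]
    exact Finset.sum_congr rfl fun a _ => Finset.sum_congr rfl fun b _ => by ring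
  rw [Matrix.diag_apply, e]
  exact h

/-- Type I covariance bound with uniform weights: if B = (B₁,…,B_K) has full row
rank and S is PSD with tr(Bₗ' S Bₗ) ≤ α for all ℓ, then
|S_{jk}| ≤ α K √((BB')⁻¹_{jj} (BB')⁻¹_{kk}). -/
theorem typeI_uniform_bound {m K : ℕ} {s : Fin K → ℕ}
    (Bs : (ℓ : Fin K) → Matrix (Fin m) (Fin (s ℓ)) ℝ)
    (B : Matrix (Fin m) ((ℓ : Fin K) × Fin (s ℓ)) ℝ)
    (hB : B = Matrix.of fun i p => Bs p.1 i p.2)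
    (hrank : colSpace B = ⊤)
    (S : Matrix (Fin m) (Fin m) ℝ) (hS : S.PosSemidef) (α : ℝ)
    (hα : ∀ ℓ : Fin K, ((Bs ℓ)ᵀ * S * Bs ℓ).trace ≤ α) (j k : Fin m) :
    |S j k| ≤ α * K * Real.sqrt ((B * Bᵀ)⁻¹ j j * (B * Bᵀ)⁻¹ k k) := by
  -- K positive
  rcases Nat.eq_zero_or_pos K with hK0 | hKpos
  · exfalso
    subst hK0
    haveI : IsEmpty ((ℓ : Fin 0) × Fin (s ℓ)) := ⟨fun p => p.1.elim0⟩
    obtain ⟨v, hv⟩ : ∃ v, B.mulVecLin v = Pi.single j 1 := by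
      have hmem : (Pi.single j 1 : Fin m → ℝ) ∈ colSpace B := by
        rw [hrank]; trivial
      exact hmem
    have h := congrFun hv j
    simp [Matrix.mulVecLin, Matrix.mulVec, dotProduct, Finset.univ_eq_empty,
      Pi.single_apply] at h
  -- B * Bᵀ is positive definite
  have hMpd : (B * Bᵀ).PosDef := by
    refine posDef_iff_dotProduct_mulVec.mpr ⟨?_, ?_⟩
    · ext a b
      simp only [conjTranspose_apply, star_trivial, Matrix.mul_apply, transpose_apply]
      exact Finset.sum_congr rfl fun p _ => by ring
    · intro x hx
      have key : x ⬝ᵥ ((B * Bᵀ) *ᵥ x) = (Bᵀ *ᵥ x) ⬝ᵥ (Bᵀ *ᵥ x) := by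
        rw [← Matrix.mulVec_mulVec, Matrix.dotProduct_mulVec, ← Matrix.mulVec_transpose]
      have hBx : Bᵀ *ᵥ x ≠ 0 := by
        intro h0
        obtain ⟨v, hv⟩ : ∃ v, B.mulVecLin v = x := by
          have hmem : x ∈ colSpace B := by rw [hrank]; trivial
          exact hmem
        apply hx
        have h3 : x ⬝ᵥ (B *ᵥ v) = 0 := by
          rw [Matrix.dotProduct_mulVec, ← Matrix.mulVec_transpose, h0, zero_dotProduct]
        have hx2 : x ⬝ᵥ x = 0 := by
          nth_rewrite 2 [← hv]
          rw [Matrix.mulVecLin_apply]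
          exact h3
        exact (dotProduct_self_eq_zero).mp hx2
      have hnn : 0 ≤ (Bᵀ *ᵥ x) ⬝ᵥ (Bᵀ *ᵥ x) := by
        refine Finset.sum_nonneg fun i _ => mul_self_nonneg _
      have hpos : 0 < (Bᵀ *ᵥ x) ⬝ᵥ (Bᵀ *ᵥ x) :=
        lt_of_le_of_ne hnn fun h0 => hBx (dotProduct_self_eq_zero.mp h0.symm)
      calc (0:ℝ) < (Bᵀ *ᵥ x) ⬝ᵥ (Bᵀ *ᵥ x) := hpos
        _ = x ⬝ᵥ ((B * Bᵀ) *ᵥ x) := key.symm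
        _ = star x ⬝ᵥ ((B * Bᵀ) *ᵥ x) := by simp [star_trivial]
  -- α is nonnegative
  have hα0 : 0 ≤ α := le_trans (trace_conj_nonneg hS (Bs ⟨0, hKpos⟩)) (hα ⟨0, hKpos⟩)
  have hαK : 0 ≤ α * (K:ℝ) := mul_nonneg hα0 (Nat.cast_nonneg _)
  -- trace bound
  have htrace : (S * (B * Bᵀ)).trace ≤ α * K := by
    have h1 : (S * (B * Bᵀ)).trace = (Bᵀ * S * B).trace := by
      rw [Matrix.trace_mul_comm, Matrix.trace_mul_cycle Bᵀ S B, Matrix.mul_assoc]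
    have h2 : (Bᵀ * S * B).trace = ∑ ℓ, ((Bs ℓ)ᵀ * S * Bs ℓ).trace := by
      subst hB
      rw [Matrix.trace, ← Finset.univ_sigma_univ, Finset.sum_sigma]
      refine Finset.sum_congr rfl fun ℓ _ => ?_
      rw [Matrix.trace]
      refine Finset.sum_congr rfl fun t _ => ?_
      simp only [Matrix.diag_apply, Matrix.mul_apply, Matrix.transpose_apply, Matrix.of_apply]
    calc (S * (B * Bᵀ)).trace = ∑ ℓ, ((Bs ℓ)ᵀ * S * Bs ℓ).trace := by rw [h1, h2]
      _ ≤ ∑ _ℓ : Fin K, α := Finset.sum_le_sum fun ℓ _ => hα ℓ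
      _ = α * K := by
          rw [Finset.sum_const, Finset.card_univ, Fintype.card_fin, nsmul_eq_mul, mul_comm]
  -- diagonal bounds
  have hMinvjj : 0 ≤ (B * Bᵀ)⁻¹ j j := psd_diag_nonneg hMpd.inv.posSemidef j
  have hMinvkk : 0 ≤ (B * Bᵀ)⁻¹ k k := psd_diag_nonneg hMpd.inv.posSemidef k
  have hjj : S j j ≤ α * K * (B * Bᵀ)⁻¹ j j :=
    le_trans (diag_le_trace_mul_inv hS hMpd j) (mul_le_mul_of_nonneg_right htrace hMinvjj)
  have hkk : S k k ≤ α * K * (B * Bᵀ)⁻¹ k k :=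
    le_trans (diag_le_trace_mul_inv hS hMpd k) (mul_le_mul_of_nonneg_right htrace hMinvkk)
  have hSkk0 : 0 ≤ S k k := psd_diag_nonneg hS k
  have hsq : (S j k) ^ 2 ≤ (α * K * (B * Bᵀ)⁻¹ j j) * (α * K * (B * Bᵀ)⁻¹ k k) :=
    le_trans (psd_sq_apply_le hS j k)
      (mul_le_mul hjj hkk hSkk0 (mul_nonneg hαK hMinvjj))
  have habs : |S j k| = Real.sqrt ((S j k) ^ 2) := (Real.sqrt_sq_eq_abs _).symm
  rw [habs]
  refine le_trans (Real.sqrt_le_sqrt hsq) ?_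
  have hre : (α * K * (B * Bᵀ)⁻¹ j j) * (α * K * (B * Bᵀ)⁻¹ k k)
      = (α * K) ^ 2 * ((B * Bᵀ)⁻¹ j j * (B * Bᵀ)⁻¹ k k) := by ring
  rw [hre, Real.sqrt_mul (sq_nonneg _), Real.sqrt_sq hαK]
end

section
/- Let B₁,…,B_K be real matrices with B_ℓ of size m×s_ℓ and B = (B₁,…,B_K) of full row rank m. Let Σ be an m×m real symmetric positive semidefinite matrix with tr(B_ℓ' Σ B_ℓ) ≤ α for all ℓ. Then for all j ≠ k, |Σ_{jk}| ≤ (α/2) K λ_max(E_{jk}' (BB')⁻¹ E_{jk}), where E_{jk} = (e_j, e_k). -/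
open Matrix

section Aux

lemma psdTraceNonneg {n : Type*} [Fintype n] [DecidableEq n] {S : Matrix n n ℝ}
    (hS : S.PosSemidef) : 0 ≤ S.trace := by
  refine Finset.sum_nonneg fun i _ => ?_
  have := hS.dotProduct_mulVec_nonneg (Pi.single i 1)
  simpa [mulVec_single, dotProduct, Pi.single_apply] using this

lemma traceMulPsd {n : Type*} [Fintype n] [DecidableEq n] {S P : Matrix n n ℝ}
    (hS : S.PosSemidef) (hP : P.PosSemidef) : 0 ≤ (S*P).trace := by
  obtain ⟨A, rfl⟩ : ∃ A : Matrix n n ℝ, S = Aᴴ * A := by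
    open scoped MatrixOrder in
    exact ⟨CFC.sqrt S, by rw [(CFC.sqrt_nonneg S).posSemidef.1.eq, CFC.sqrt_mul_sqrt_self S hS.nonneg]⟩
  rw [Matrix.mul_assoc, trace_mul_comm]
  exact psdTraceNonneg (hP.mul_mul_conjTranspose_same A)

lemma vecMulVec_herm {n : Type*} [Fintype n] (x : n → ℝ) : (vecMulVec x x).IsHermitian := by
  ext i j
  simp [conjTranspose_apply, vecMulVec_apply, mul_comm]

lemma vecMulVec_mulVec' {n : Type*} [Fintype n] (x v : n → ℝ) :
    vecMulVec x x *ᵥ v = (x ⬝ᵥ v) • x := by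
  ext i
  simp [vecMulVec_apply, mulVec, dotProduct, Finset.mul_sum, Finset.sum_mul]
  congr 1; ext j; ring

lemma key_quad {n : Type*} [Fintype n] [DecidableEq n] {G S : Matrix n n ℝ}
    (hG : G.PosDef) (hS : S.PosSemidef) (x : n → ℝ) :
    x ⬝ᵥ S *ᵥ x ≤ (S * G).trace * (x ⬝ᵥ G⁻¹ *ᵥ x) := by
  have hdet : IsUnit G.det := hG.det_pos.ne'.isUnit
  have hGH : G * G⁻¹ = 1 := G.mul_nonsing_inv hdet
  set H := G⁻¹ with hHdef
  set u : n → ℝ := H *ᵥ x with hu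
  have hGu : G *ᵥ u = x := by rw [hu, mulVec_mulVec, hGH, one_mulVec]
  have hGt : Gᵀ = G := by
    have := hG.1
    ext i j
    have := congrFun (congrFun this i) j
    simpa [conjTranspose_apply] using this
  set c : ℝ := x ⬝ᵥ H *ᵥ x with hc
  set P : Matrix n n ℝ := c • G - vecMulVec x x with hP
  have hPpsd : P.PosSemidef := by
    refine posSemidef_iff_dotProduct_mulVec.mpr ⟨?_, ?_⟩
    · refine IsHermitian.sub ?_ (vecMulVec_herm x)
      show (c • G)ᴴ = c • G
      rw [conjTranspose_smul, star_trivial, hG.1]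
    · intro v
      have key : ∀ t : ℝ, 0 ≤ c * (t*t) + (2*(x ⬝ᵥ v)) * t + (v ⬝ᵥ G *ᵥ v) := by
        intro t
        have h0 := hG.posSemidef.dotProduct_mulVec_nonneg (v + t • u)
        have e1 : v ⬝ᵥ G *ᵥ u = v ⬝ᵥ x := by rw [hGu]
        have e2 : u ⬝ᵥ G *ᵥ v = x ⬝ᵥ v := by
          rw [dotProduct_mulVec, ← mulVec_transpose, hGt, hGu]
        have e3 : u ⬝ᵥ G *ᵥ u = c := by
          rw [hGu, hc, hu, dotProduct_comm]
        simp only [star_trivial, dotProduct_add, add_dotProduct, mulVec_add, mulVec_smul,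
          dotProduct_smul, smul_dotProduct, smul_eq_mul, e1, e2, e3] at h0
        have e4 : v ⬝ᵥ x = x ⬝ᵥ v := dotProduct_comm _ _
        have h5 : c * (t*t) + (2*(x ⬝ᵥ v)) * t + (v ⬝ᵥ G *ᵥ v)
            = v ⬝ᵥ G *ᵥ v + t * (x ⬝ᵥ v) + t * (v ⬝ᵥ x + t * c) := by rw [e4]; ring
        rw [h5]; exact h0
      have hd := discrim_le_zero key
      rw [discrim] at hd
      have hquad : v ⬝ᵥ P *ᵥ v = c * (v ⬝ᵥ G *ᵥ v) - (x ⬝ᵥ v)^2 := by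
        rw [hP, sub_mulVec, dotProduct_sub, smul_mulVec, dotProduct_smul,
          vecMulVec_mulVec', dotProduct_smul, smul_eq_mul, smul_eq_mul, dotProduct_comm v x]
        ring
      rw [star_trivial, hquad]
      nlinarith [hd]
  have htr := traceMulPsd hS hPpsd
  have htr2 : (S * P).trace = c * (S * G).trace - x ⬝ᵥ S *ᵥ x := by
    rw [hP, Matrix.mul_sub, trace_sub, Matrix.mul_smul, trace_smul, smul_eq_mul]
    congr 1
    simp only [Matrix.trace, Matrix.diag_apply, mul_apply, vecMulVec_apply, dotProduct, mulVec,
      Finset.mul_sum]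
    refine Finset.sum_congr rfl fun i _ => Finset.sum_congr rfl fun j _ => by ring
  rw [htr2] at htr
  linarith

lemma maxEig_2x2 (a b c : ℝ) :
    maxEigenvalue !![a,b;b,c] = (a+c)/2 + Real.sqrt (((a-c)/2)^2 + b^2) := by
  set s : ℝ := Real.sqrt (((a-c)/2)^2 + b^2) with hs
  have hDnn : (0:ℝ) ≤ ((a-c)/2)^2 + b^2 := by positivity
  have hs2 : s^2 = ((a-c)/2)^2 + b^2 := Real.sq_sqrt hDnn
  have hsnn : 0 ≤ s := Real.sqrt_nonneg _
  set lam : ℝ := (a+c)/2 + s with hlam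
  set T : Set ℝ := {t : ℝ | ∃ v : Fin 2 → ℝ, v ≠ 0 ∧ (!![a,b;b,c]).mulVec v = t • v} with hT
  have hub : ∀ t ∈ T, t ≤ lam := by
    rintro t ⟨v, hv, heq⟩
    have h0 : a * v 0 + b * v 1 = t * v 0 := by
      have := congrFun heq 0
      simpa [mulVec, dotProduct, Fin.sum_univ_two] using this
    have h1 : b * v 0 + c * v 1 = t * v 1 := by
      have := congrFun heq 1
      simpa [mulVec, dotProduct, Fin.sum_univ_two] using this
    have key : (t-a)*(t-c) = b^2 := by
      by_cases h00 : v 0 = 0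
      · have h10 : v 1 ≠ 0 := by
          intro h11
          apply hv
          ext i
          fin_cases i <;> simp [h00, h11]
        have hb : b = 0 := by
          have : b * v 1 = 0 := by rw [h00] at h0; linarith
          exact (mul_eq_zero.mp this).resolve_right h10
        have htc : t = c := by
          have : c * v 1 = t * v 1 := by rw [h00, hb] at h1; linarith
          exact (mul_right_cancel₀ h10 this.symm)
        rw [htc, hb]; ring
      · by_cases h10 : v 1 = 0
        · have hb : b = 0 := by
            have : b * v 0 = 0 := by rw [h10] at h1; linarith
            exact (mul_eq_zero.mp this).resolve_right h00
          have hta : t = a := by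
            have : a * v 0 = t * v 0 := by rw [h10, hb] at h0; linarith
            exact (mul_right_cancel₀ h00 this.symm)
          rw [hta, hb]; ring
        · have e0 : (t-a) * v 0 = b * v 1 := by linarith
          have e1 : (t-c) * v 1 = b * v 0 := by linarith
          have hmul : ((t-a)*(t-c)) * (v 0 * v 1) = b^2 * (v 0 * v 1) := by
            linear_combination ((t-c) * v 1) * e0 + (b * v 1) * e1
          exact mul_right_cancel₀ (mul_ne_zero h00 h10) hmul
    have hsq : (t - (a+c)/2)^2 = s^2 := by rw [hs2]; nlinarith [key]
    by_contra hgt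
    push_neg at hgt
    have h2 : (a+c)/2 + s < t := by rw [← hlam]; exact hgt
    have h3 : 0 < t - (a+c)/2 - s := by linarith
    have h4 : 0 < t - (a+c)/2 + s := by linarith
    nlinarith [mul_pos h3 h4, hsq]
  have hmem : lam ∈ T := by
    by_cases hb : b = 0
    · rcases le_or_gt c a with hac | hac
      · refine ⟨![1, 0], fun h => one_ne_zero (congrFun h 0), ?_⟩
        have hsv : s = (a-c)/2 := by
          rw [hs, hb, show ((a-c)/2)^2 + (0:ℝ)^2 = ((a-c)/2)^2 by ring]
          exact Real.sqrt_sq (by linarith : (0:ℝ) ≤ (a-c)/2)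
        have hl : lam = a := by rw [hlam, hsv]; ring
        ext i
        fin_cases i <;> simp [mulVec, dotProduct, Fin.sum_univ_two, hl, hb]
      · refine ⟨![0, 1], fun h => one_ne_zero (congrFun h 1), ?_⟩
        have hsv : s = (c-a)/2 := by
          rw [hs, hb, show ((a-c)/2)^2 + (0:ℝ)^2 = ((c-a)/2)^2 by ring]
          exact Real.sqrt_sq (by linarith : (0:ℝ) ≤ (c-a)/2)
        have hl : lam = c := by rw [hlam, hsv]; ring
        ext i
        fin_cases i <;> simp [mulVec, dotProduct, Fin.sum_univ_two, hl, hb]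
    · refine ⟨![b, lam - a], fun h => hb (congrFun h 0), ?_⟩
      have hkey : b^2 = (lam - a) * (lam - c) := by
        have hll : (lam - (a+c)/2)^2 = s^2 := by rw [hlam]; ring
        linear_combination (-1) * hll + (-1) * hs2
      ext i
      fin_cases i
      · simp [mulVec, dotProduct, Fin.sum_univ_two]
        ring
      · simp [mulVec, dotProduct, Fin.sum_univ_two]
        linear_combination hkey
  have hbdd : BddAbove T := ⟨lam, hub⟩
  exact le_antisymm (csSup_le ⟨lam, hmem⟩ hub) (le_csSup hbdd hmem)

lemma quad_single {m : ℕ} (M : Matrix (Fin m) (Fin m) ℝ) (j k : Fin m) (ε : ℝ) :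
    ((Pi.single j 1 : Fin m → ℝ) + ε • (Pi.single k 1 : Fin m → ℝ)) ⬝ᵥ
      M *ᵥ ((Pi.single j 1 : Fin m → ℝ) + ε • (Pi.single k 1 : Fin m → ℝ))
      = M j j + ε * (M j k + M k j) + ε^2 * M k k := by
  have base : ∀ (p q : Fin m), (Pi.single p 1 : Fin m → ℝ) ⬝ᵥ M *ᵥ (Pi.single q 1 : Fin m → ℝ) = M p q := by
    intro p q
    simp [mulVec_single, dotProduct, Pi.single_apply]
  simp only [dotProduct_add, add_dotProduct, mulVec_add, mulVec_smul, dotProduct_smul,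
    smul_dotProduct, smul_eq_mul, base]
  ring

lemma final_scalar (Sjj Sjk Skk a b c sq KR al : ℝ)
    (hKα : 0 ≤ KR * al)
    (hbp : Sjj + 2*Sjk + Skk ≤ KR * al * (a + 2*b + c))
    (hbm : Sjj - 2*Sjk + Skk ≤ KR * al * (a - 2*b + c))
    (hp0 : 0 ≤ Sjj + 2*Sjk + Skk) (hm0 : 0 ≤ Sjj - 2*Sjk + Skk)
    (hsq : |b| ≤ sq) :
    |Sjk| ≤ al/2 * KR * ((a+c)/2 + sq) := by
  have hbs : b ≤ sq := le_trans (le_abs_self b) hsq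
  have hbs' : -b ≤ sq := le_trans (neg_le_abs b) hsq
  rw [abs_le]
  constructor
  · have h1 : a - 2*b + c ≤ 2 * ((a+c)/2 + sq) := by linarith
    have h2 := mul_le_mul_of_nonneg_left h1 hKα
    nlinarith [h2, hbm, hp0]
  · have h1 : a + 2*b + c ≤ 2 * ((a+c)/2 + sq) := by linarith
    have h2 := mul_le_mul_of_nonneg_left h1 hKα
    nlinarith [h2, hbp, hm0]

end Aux

/-- Type II covariance bound with uniform weights: if B = (B₁,…,B_K) has full
row rank and S is PSD with tr(Bₗ' S Bₗ) ≤ α for all ℓ, then for j ≠ k,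
|S_{jk}| ≤ (α/2) K λ_max(E_{jk}' (BB')⁻¹ E_{jk}). -/
theorem typeII_uniform_bound {m K : ℕ} {s : Fin K → ℕ}
    (Bs : (ℓ : Fin K) → Matrix (Fin m) (Fin (s ℓ)) ℝ)
    (B : Matrix (Fin m) ((ℓ : Fin K) × Fin (s ℓ)) ℝ)
    (hB : B = Matrix.of fun i p => Bs p.1 i p.2)
    (hrank : colSpace B = ⊤)
    (S : Matrix (Fin m) (Fin m) ℝ) (hS : S.PosSemidef) (α : ℝ)
    (hα : ∀ ℓ : Fin K, ((Bs ℓ)ᵀ * S * Bs ℓ).trace ≤ α)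
    (j k : Fin m) (hjk : j ≠ k) :
    |S j k| ≤ α / 2 * K * maxEigenvalue ((Ejk j k)ᵀ * (B * Bᵀ)⁻¹ * Ejk j k) := by
  classical
  -- K is positive
  have hK : 0 < K := by
    by_contra hK0
    push_neg at hK0
    interval_cases K
    haveI : IsEmpty ((ℓ : Fin 0) × Fin (s ℓ)) := by
      refine ⟨fun p => ?_⟩
      exact p.1.elim0
    have hmem : Pi.single j 1 ∈ colSpace B := hrank ▸ Submodule.mem_top
    obtain ⟨x, hx⟩ := hmem
    have := congrFun hx j
    simp [Matrix.mulVecLin_apply, mulVec, dotProduct, Pi.single_apply] at this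
  -- G is positive definite
  set G : Matrix (Fin m) (Fin m) ℝ := B * Bᵀ with hGdef
  have hGherm : G.IsHermitian := by
    show Gᴴ = G
    rw [hGdef, conjTranspose_eq_transpose_of_trivial, transpose_mul, transpose_transpose]
  have hGpd : G.PosDef := by
    refine posDef_iff_dotProduct_mulVec.mpr ⟨hGherm, fun v hv => ?_⟩
    have hq : v ⬝ᵥ G *ᵥ v = (Bᵀ *ᵥ v) ⬝ᵥ (Bᵀ *ᵥ v) := by
      rw [hGdef, ← mulVec_mulVec, dotProduct_mulVec, ← mulVec_transpose]
    rw [star_trivial, hq]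
    have hnn : 0 ≤ (Bᵀ *ᵥ v) ⬝ᵥ (Bᵀ *ᵥ v) :=
      Finset.sum_nonneg fun i _ => mul_self_nonneg _
    rcases hnn.lt_or_eq with h | h
    · exact h
    · exfalso
      have hz : Bᵀ *ᵥ v = 0 := dotProduct_self_eq_zero.mp h.symm
      have hmem : v ∈ colSpace B := hrank ▸ Submodule.mem_top
      obtain ⟨x, hx⟩ := hmem
      apply hv
      have hvv : v ⬝ᵥ v = 0 := by
        have : v ⬝ᵥ B *ᵥ x = 0 := by
          rw [dotProduct_mulVec, ← mulVec_transpose, hz, zero_dotProduct]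
        rwa [show B *ᵥ x = v from hx] at this
      exact dotProduct_self_eq_zero.mp hvv
  have hdet : IsUnit G.det := hGpd.det_pos.ne'.isUnit
  set H : Matrix (Fin m) (Fin m) ℝ := G⁻¹ with hHdef
  have hHpd : H.PosDef := hGpd.inv
  have hHsym : H k j = H j k := by
    have := hHpd.1.apply j k
    simpa using this
  have hSsym : S k j = S j k := by
    have := hS.1.apply j k
    simpa using this
  -- trace bound
  have htrace : (S * G).trace ≤ (K : ℝ) * α := by
    have h1 : (S * G).trace = (Bᵀ * (S * B)).trace := by
      rw [hGdef, ← Matrix.mul_assoc, trace_mul_comm (S * B) Bᵀ]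
    have h2 : (Bᵀ * (S * B)).trace = ∑ ℓ : Fin K, ((Bs ℓ)ᵀ * S * Bs ℓ).trace := by
      rw [Matrix.trace]
      rw [← Finset.univ_sigma_univ, Finset.sum_sigma]
      refine Finset.sum_congr rfl fun ℓ _ => Finset.sum_congr rfl fun t _ => ?_
      simp only [Matrix.diag_apply, mul_apply, hB, Matrix.of_apply, transpose_apply,
        Finset.sum_mul, Finset.mul_sum]
      rw [Finset.sum_comm]
      refine Finset.sum_congr rfl fun i _ => Finset.sum_congr rfl fun i' _ => by ring
    rw [h1, h2]
    calc ∑ ℓ : Fin K, ((Bs ℓ)ᵀ * S * Bs ℓ).trace ≤ ∑ _ℓ : Fin K, α :=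
          Finset.sum_le_sum fun ℓ _ => hα ℓ
      _ = (K : ℝ) * α := by simp [Finset.sum_const, nsmul_eq_mul]
  have hTnn : 0 ≤ (S * G).trace := traceMulPsd hS hGpd.posSemidef
  have hα0 : 0 ≤ α := by
    have ℓ₀ : Fin K := ⟨0, hK⟩
    refine le_trans ?_ (hα ℓ₀)
    have hpsd : ((Bs ℓ₀)ᵀ * S * Bs ℓ₀).PosSemidef := by
      have := hS.conjTranspose_mul_mul_same (Bs ℓ₀)
      rwa [conjTranspose_eq_transpose_of_trivial] at this
    exact psdTraceNonneg hpsd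
  -- quadratic form bounds
  set a : ℝ := H j j with ha
  set b : ℝ := H j k with hb
  set c : ℝ := H k k with hc
  set xp : Fin m → ℝ := (Pi.single j 1 : Fin m → ℝ) + (1:ℝ) • (Pi.single k 1 : Fin m → ℝ) with hxp
  set xm : Fin m → ℝ := (Pi.single j 1 : Fin m → ℝ) + (-1:ℝ) • (Pi.single k 1 : Fin m → ℝ) with hxm
  have hqSp : xp ⬝ᵥ S *ᵥ xp = S j j + 2 * S j k + S k k := by
    rw [hxp, quad_single, hSsym]; ring
  have hqSm : xm ⬝ᵥ S *ᵥ xm = S j j - 2 * S j k + S k k := by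
    rw [hxm, quad_single, hSsym]; ring
  have hqHp : xp ⬝ᵥ H *ᵥ xp = a + 2*b + c := by
    rw [hxp, quad_single, hHsym, ← ha, ← hb, ← hc]; ring
  have hqHm : xm ⬝ᵥ H *ᵥ xm = a - 2*b + c := by
    rw [hxm, quad_single, hHsym, ← ha, ← hb, ← hc]; ring
  have hkp := key_quad hGpd hS xp
  have hkm := key_quad hGpd hS xm
  have hHpnn : 0 ≤ xp ⬝ᵥ H *ᵥ xp := by
    have := hHpd.posSemidef.dotProduct_mulVec_nonneg xp; rwa [star_trivial] at this
  have hHmnn : 0 ≤ xm ⬝ᵥ H *ᵥ xm := by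
    have := hHpd.posSemidef.dotProduct_mulVec_nonneg xm; rwa [star_trivial] at this
  have hSpnn : 0 ≤ xp ⬝ᵥ S *ᵥ xp := by
    have := hS.dotProduct_mulVec_nonneg xp; rwa [star_trivial] at this
  have hSmnn : 0 ≤ xm ⬝ᵥ S *ᵥ xm := by
    have := hS.dotProduct_mulVec_nonneg xm; rwa [star_trivial] at this
  have hbp : xp ⬝ᵥ S *ᵥ xp ≤ (K:ℝ) * α * (xp ⬝ᵥ H *ᵥ xp) :=
    le_trans hkp (mul_le_mul_of_nonneg_right htrace hHpnn)
  have hbm : xm ⬝ᵥ S *ᵥ xm ≤ (K:ℝ) * α * (xm ⬝ᵥ H *ᵥ xm) :=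
    le_trans hkm (mul_le_mul_of_nonneg_right htrace hHmnn)
  -- the 2x2 matrix and its max eigenvalue
  have hM2 : (Ejk j k)ᵀ * H * Ejk j k = !![a, b; b, c] := by
    ext p q
    fin_cases p <;> fin_cases q <;>
      simp [Ejk, mul_apply, Pi.single_apply, Finset.mul_sum, Finset.sum_mul, ha, hb, hc, hHsym]
  rw [hM2, maxEig_2x2]
  set sq : ℝ := Real.sqrt (((a-c)/2)^2 + b^2) with hsq
  have hsqb : |b| ≤ sq := by
    rw [hsq, ← Real.sqrt_sq_eq_abs]
    exact Real.sqrt_le_sqrt (by nlinarith [sq_nonneg ((a-c)/2)])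
  have hKαnn : 0 ≤ (K:ℝ) * α := mul_nonneg (Nat.cast_nonneg K) hα0
  rw [hqSp, hqHp] at hbp
  rw [hqSm, hqHm] at hbm
  rw [hqSp] at hSpnn
  rw [hqSm] at hSmnn
  exact final_scalar (S j j) (S j k) (S k k) a b c sq (K:ℝ) α hKαnn hbp hbm hSpnn hSmnn hsqb
end

section
/- Let B₁,…,B_K be real matrices with B_ℓ of size m×s_ℓ, with concatenation B of full row rank m, and let α > 0. Then the set {Σ ∈ S^m_+ : tr(B_ℓ' Σ B_ℓ) ≤ α for all ℓ} is bounded; in particular, every entry of every matrix in this set has absolute value at most α K max_j (BB')⁻¹_{jj}. -/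
open Matrix

lemma dot_sandwich {n : ℕ} (A W : Matrix (Fin n) (Fin n) ℝ) (v : Fin n → ℝ) :
    (A *ᵥ v) ⬝ᵥ W *ᵥ (A *ᵥ v) = v ⬝ᵥ (Aᵀ * W * A) *ᵥ v := by
  calc (A *ᵥ v) ⬝ᵥ W *ᵥ (A *ᵥ v)
      = (v ᵥ* Aᵀ) ⬝ᵥ W *ᵥ (A *ᵥ v) := by rw [vecMul_transpose]
    _ = v ⬝ᵥ Aᵀ *ᵥ (W *ᵥ (A *ᵥ v)) := (dotProduct_mulVec v Aᵀ _).symm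
    _ = v ⬝ᵥ (Aᵀ * W * A) *ᵥ v := by
        rw [mulVec_mulVec, mulVec_mulVec, Matrix.mul_assoc]

lemma dot_self_mulVec {n : ℕ} (A : Matrix (Fin n) (Fin n) ℝ) (v : Fin n → ℝ) :
    (A *ᵥ v) ⬝ᵥ (A *ᵥ v) = v ⬝ᵥ (Aᵀ * A) *ᵥ v := by
  calc (A *ᵥ v) ⬝ᵥ (A *ᵥ v)
      = (v ᵥ* Aᵀ) ⬝ᵥ (A *ᵥ v) := by rw [vecMul_transpose]
    _ = v ⬝ᵥ Aᵀ *ᵥ (A *ᵥ v) := (dotProduct_mulVec v Aᵀ _).symm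
    _ = v ⬝ᵥ (Aᵀ * A) *ᵥ v := by rw [mulVec_mulVec]

/-- Cauchy–Schwarz-type bound: for a PSD matrix `C`,
`uᵀ C u ≤ tr(C) * ‖u‖²`. -/
lemma quad_le_trace_mul {n : ℕ} (C : Matrix (Fin n) (Fin n) ℝ)
    (hC : C.PosSemidef) (u : Fin n → ℝ) :
    u ⬝ᵥ C *ᵥ u ≤ C.trace * (u ⬝ᵥ u) := by
  open scoped MatrixOrder in set D := CFC.sqrt C with hDdef
  have hDD : D * D = C := by
    open scoped MatrixOrder in have := CFC.sq_sqrt C hC.nonneg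
    rwa [pow_two] at this
  have hDsym : Dᵀ = D := by
    open scoped MatrixOrder in exact (CFC.sqrt_nonneg C).posSemidef.isHermitian
  have key : u ⬝ᵥ C *ᵥ u = (D *ᵥ u) ⬝ᵥ (D *ᵥ u) := by
    rw [← hDD, ← mulVec_mulVec, dotProduct_mulVec, ← vecMul_transpose, hDsym]
  have htr : C.trace = ∑ i, ∑ k, D i k ^ 2 := by
    rw [← hDD]
    simp only [Matrix.trace, Matrix.diag, Matrix.mul_apply]
    refine Finset.sum_congr rfl fun i _ => Finset.sum_congr rfl fun k _ => ?_
    have : D k i = D i k := congrFun (congrFun hDsym i) k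
    rw [this, pow_two]
  rw [key, htr]
  have h1 : (D *ᵥ u) ⬝ᵥ (D *ᵥ u) = ∑ i, (∑ k, D i k * u k) ^ 2 := by
    simp [dotProduct, Matrix.mulVec, pow_two]
  rw [h1, Finset.sum_mul]
  refine Finset.sum_le_sum fun i _ => ?_
  have := Finset.sum_mul_sq_le_sq_mul_sq Finset.univ (fun k => D i k) u
  simpa [dotProduct, pow_two] using this

/-- Finiteness of the SDP-based bounds: the feasible set
{S ∈ S^m_+ : tr(Bₗ' S Bₗ) ≤ α ∀ℓ} is bounded; every entry of every feasible
matrix has absolute value at most α K max_j (BB')⁻¹_{jj}. -/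
theorem sdp_feasible_set_bounded {m K : ℕ} {s : Fin K → ℕ}
    (Bs : (ℓ : Fin K) → Matrix (Fin m) (Fin (s ℓ)) ℝ)
    (B : Matrix (Fin m) ((ℓ : Fin K) × Fin (s ℓ)) ℝ)
    (hB : B = Matrix.of fun i p => Bs p.1 i p.2)
    (hrank : colSpace B = ⊤) (α : ℝ) (hα : 0 < α) :
    ∀ (S : Matrix (Fin m) (Fin m) ℝ), S.PosSemidef →
      (∀ ℓ : Fin K, ((Bs ℓ)ᵀ * S * Bs ℓ).trace ≤ α) →
      ∀ j k : Fin m,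
        |S j k| ≤ α * K * Finset.univ.sup' ⟨j, Finset.mem_univ j⟩
          (fun i => (B * Bᵀ)⁻¹ i i) := by
  intro S hS htr j k
  set M := B * Bᵀ with hMdef
  -- M is positive definite
  have hMpd : M.PosDef := by
    refine Matrix.PosDef.of_dotProduct_mulVec_pos ?_ ?_
    · show Mᴴ = M
      ext i i'
      simp [hMdef, Matrix.mul_apply, mul_comm]
    · intro x hx
      have hq : x ⬝ᵥ M *ᵥ x = (Bᵀ *ᵥ x) ⬝ᵥ (Bᵀ *ᵥ x) := by
        rw [hMdef, ← mulVec_mulVec, dotProduct_mulVec, ← vecMul_transpose,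
          transpose_transpose]
      have hBx : Bᵀ *ᵥ x ≠ 0 := by
        intro h0
        apply hx
        rw [← dotProduct_self_eq_zero (v := x)]
        have hsurj : ∀ z : Fin m → ℝ, ∃ y, B *ᵥ y = z := by
          intro z
          have : z ∈ colSpace B := by rw [hrank]; trivial
          obtain ⟨y, hy⟩ := this
          exact ⟨y, hy⟩
        obtain ⟨y, hy⟩ := hsurj x
        calc x ⬝ᵥ x = x ⬝ᵥ (B *ᵥ y) := by rw [hy]
          _ = (Bᵀ *ᵥ x) ⬝ᵥ y := by rw [dotProduct_mulVec, ← mulVec_transpose]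
          _ = 0 := by rw [h0]; simp
      have : 0 < (Bᵀ *ᵥ x) ⬝ᵥ (Bᵀ *ᵥ x) := by
        rcases lt_or_eq_of_le (Finset.sum_nonneg fun i _ =>
          mul_self_nonneg ((Bᵀ *ᵥ x) i) : (0:ℝ) ≤ (Bᵀ *ᵥ x) ⬝ᵥ (Bᵀ *ᵥ x)) with h | h
        · exact h
        · exact absurd (dotProduct_self_eq_zero.mp h.symm) hBx
      rw [star_trivial]
      rw [hq]; exact this
  have hMdet : IsUnit M.det := isUnit_iff_ne_zero.mpr (ne_of_gt hMpd.det_pos)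
  -- the square root T of M
  open scoped MatrixOrder in set T := CFC.sqrt M with hTdef
  have hTT : T * T = M := by
    open scoped MatrixOrder in have := CFC.sq_sqrt M hMpd.posSemidef.nonneg
    rwa [pow_two] at this
  have hTsym : Tᵀ = T := by
    open scoped MatrixOrder in exact (CFC.sqrt_nonneg M).posSemidef.isHermitian
  have hTdet : IsUnit T.det := by
    rw [isUnit_iff_ne_zero]
    intro h0
    have : M.det = 0 := by rw [← hTT, Matrix.det_mul, h0, mul_zero]
    exact (ne_of_gt hMpd.det_pos) this
  -- trace bound : tr(S M) ≤ α K
  have htrace : (S * M).trace ≤ α * K := by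
    have h1 : (S * M).trace = (Bᵀ * S * B).trace := by
      rw [hMdef, ← Matrix.mul_assoc, Matrix.trace_mul_comm, ← Matrix.mul_assoc]
    have h2 : (Bᵀ * S * B).trace = ∑ ℓ : Fin K, ((Bs ℓ)ᵀ * S * Bs ℓ).trace := by
      simp only [Matrix.trace, Matrix.diag]
      rw [← Finset.univ_sigma_univ, Finset.sum_sigma]
      refine Finset.sum_congr rfl fun ℓ _ => Finset.sum_congr rfl fun t _ => ?_
      simp [Matrix.mul_apply, hB]
    rw [h1, h2]
    calc ∑ ℓ : Fin K, ((Bs ℓ)ᵀ * S * Bs ℓ).trace ≤ ∑ _ℓ : Fin K, α :=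
          Finset.sum_le_sum fun ℓ _ => htr ℓ
      _ = α * K := by simp [mul_comm]
  -- diagonal bound
  have hdiag : ∀ i : Fin m, S i i ≤ α * K * M⁻¹ i i := by
    intro i
    set e : Fin m → ℝ := Pi.single i 1 with hedef
    set u : Fin m → ℝ := T⁻¹ *ᵥ e with hudef
    have hTu : T *ᵥ u = e := by
      rw [hudef, mulVec_mulVec, Matrix.mul_nonsing_inv T hTdet, Matrix.one_mulVec]
    have hSii : S i i = e ⬝ᵥ S *ᵥ e := by
      simp [hedef, Matrix.mulVec_single, single_dotProduct]
    have hquad : e ⬝ᵥ S *ᵥ e = u ⬝ᵥ (T * S * T) *ᵥ u := by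
      rw [← hTu, dot_sandwich, hTsym]
    have hC : (T * S * T).PosSemidef := by
      have := hS.mul_mul_conjTranspose_same T
      have hTH : Tᴴ = T := by
        show Tᵀ = T
        exact hTsym
      rwa [hTH] at this
    have hle := quad_le_trace_mul (T * S * T) hC u
    have hCtr : (T * S * T).trace = (S * M).trace := by
      rw [Matrix.trace_mul_cycle, hTT, Matrix.trace_mul_comm]
    have huu : u ⬝ᵥ u = M⁻¹ i i := by
      rw [hudef, dot_self_mulVec, transpose_nonsing_inv, hTsym,
        ← Matrix.mul_inv_rev, hTT]
      simp [hedef, Matrix.mulVec_single, single_dotProduct]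
    have hMinv_pos : 0 < M⁻¹ i i := by
      have he0 : e ≠ 0 := fun h => (one_ne_zero : (1:ℝ) ≠ 0) (by simpa [hedef] using congrFun h i)
      have hpos : (0:ℝ) < e ⬝ᵥ M⁻¹ *ᵥ e := by
          have h := hMpd.inv.dotProduct_mulVec_pos he0; rwa [star_trivial] at h
      have heq : e ⬝ᵥ M⁻¹ *ᵥ e = M⁻¹ i i := by
        simp [hedef, Matrix.mulVec_single, single_dotProduct]
      rwa [heq] at hpos
    rw [hSii, hquad]
    calc u ⬝ᵥ (T * S * T) *ᵥ u ≤ (T * S * T).trace * (u ⬝ᵥ u) := hle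
      _ = (S * M).trace * M⁻¹ i i := by rw [hCtr, huu]
      _ ≤ α * K * M⁻¹ i i := mul_le_mul_of_nonneg_right htrace (le_of_lt hMinv_pos)
  -- off-diagonal bound via |S j k| ≤ (S j j + S k k)/2
  have hsym : S k j = S j k := by
    have := hS.isHermitian.apply j k
    simpa using this
  have habs : 2 * |S j k| ≤ S j j + S k k := by
    rcases abs_cases (S j k) with ⟨h1, _⟩ | ⟨h1, _⟩
    · -- |S j k| = S j k : use (e_j - e_k)
      have hq : (0:ℝ) ≤ (Pi.single j 1 - Pi.single k (1:ℝ)) ⬝ᵥ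
          S *ᵥ (Pi.single j 1 - Pi.single k (1:ℝ)) :=
        by have h := hS.dotProduct_mulVec_nonneg (Pi.single j 1 - Pi.single k (1:ℝ)); rwa [star_trivial] at h
      have : (0:ℝ) ≤ S j j + S k k - 2 * S j k := by
        have hexp : (Pi.single j 1 - Pi.single k (1:ℝ)) ⬝ᵥ
            S *ᵥ (Pi.single j 1 - Pi.single k (1:ℝ)) =
            S j j + S k k - 2 * S j k := by
          simp [dotProduct_sub, Matrix.mulVec_sub, Matrix.mulVec_single,
            single_dotProduct, sub_dotProduct, hsym]
          ring
        rwa [hexp] at hq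
      rw [h1]; linarith
    · -- |S j k| = -(S j k) : use (e_j + e_k)
      have hq : (0:ℝ) ≤ (Pi.single j 1 + Pi.single k (1:ℝ)) ⬝ᵥ
          S *ᵥ (Pi.single j 1 + Pi.single k (1:ℝ)) :=
        by have h := hS.dotProduct_mulVec_nonneg (Pi.single j 1 + Pi.single k (1:ℝ)); rwa [star_trivial] at h
      have : (0:ℝ) ≤ S j j + S k k + 2 * S j k := by
        have hexp : (Pi.single j 1 + Pi.single k (1:ℝ)) ⬝ᵥ
            S *ᵥ (Pi.single j 1 + Pi.single k (1:ℝ)) =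
            S j j + S k k + 2 * S j k := by
          simp [dotProduct_add, Matrix.mulVec_add, Matrix.mulVec_single,
            single_dotProduct, add_dotProduct, hsym]
          ring
        rwa [hexp] at hq
      rw [h1]; linarith
  -- assemble
  have hαK : (0:ℝ) ≤ α * K := by positivity
  have hsup : ∀ i : Fin m, M⁻¹ i i ≤ Finset.univ.sup' ⟨j, Finset.mem_univ j⟩
      (fun i => M⁻¹ i i) := fun i =>
    Finset.le_sup' (fun i => M⁻¹ i i) (Finset.mem_univ i)
  have hj := (hdiag j).trans (mul_le_mul_of_nonneg_left (hsup j) hαK)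
  have hk := (hdiag k).trans (mul_le_mul_of_nonneg_left (hsup k) hαK)
  linarith
end
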